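/- arXiv:2204.04346 — 2 statements merged into one kernel-verified Lean document; each statement's English description precedes it below -/
import Mathlib

section
/- Let a_j, φ_j (j = 1,2,3) be real analytic on B̃, with each a_j vanishing nowhere on B̃ and with ∇φ_i(x) and ∇φ_j(x) linearly independent at every x ∈ B̃ for all i ≠ j. Let U be a nonempty connected open subset of the interior of B, and let f_j : φ_j(U) → ℝ be real analytic functions satisfying a₁(x)f₁(φ₁(x)) + a₂(x)f₂(φ₂(x)) + a₃(x)f₃(φ₃(x)) = 0 for all x ∈ U. Then for each j ∈ {1,2,3}, f_j extends to a real analytic function on φ_j(B). -/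
open MeasureTheory Set
open scoped ENNReal

noncomputable section

set_option maxHeartbeats 1000000

open Set Metric Filter
open scoped RealInnerProductSpace

local notation "E2" => EuclideanSpace ℝ (Fin 2)

open Set

section OneDim

variable (f₀ : ℝ → ℝ) (s : Set ℝ)

/-- Witness predicate: `(V, g)` is an analytic continuation of `f₀` from `s`. -/
def IsWit (V : Set ℝ) (g : ℝ → ℝ) : Prop :=
  IsOpen V ∧ IsPreconnected V ∧ s ⊆ V ∧ AnalyticOnNhd ℝ g V ∧ EqOn g f₀ s

/-- Points to which `f₀` continues analytically from `s`. -/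
def ExtSet : Set ℝ :=
  {y | ∃ V : Set ℝ, ∃ g : ℝ → ℝ, IsWit f₀ s V g ∧ y ∈ V}

open Classical in
noncomputable def extFun (y : ℝ) : ℝ :=
  if h : y ∈ ExtSet f₀ s then h.choose_spec.choose y else 0

variable {f₀ s}
variable {y₀ : ℝ}

lemma wit_eqOn (hs : IsOpen s) (hy₀ : y₀ ∈ s) {V g V' g'}
    (w : IsWit f₀ s V g) (w' : IsWit f₀ s V' g') :
    EqOn g g' (V ∩ V') := by
  obtain ⟨hVo, hVc, hsV, hga, hgf⟩ := w
  obtain ⟨hVo', hVc', hsV', hga', hgf'⟩ := w'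
  have hIc : IsPreconnected (V ∩ V') :=
    (hVc.ordConnected.inter hVc'.ordConnected).isPreconnected
  refine AnalyticOnNhd.eqOn_of_preconnected_of_frequently_eq
    (fun y hy => hga y hy.1) (fun y hy => hga' y hy.2) hIc ⟨hsV hy₀, hsV' hy₀⟩ ?_
  have hev : ∀ᶠ z in nhds y₀, g z = g' z := by
    filter_upwards [hs.mem_nhds hy₀] with z hz
    rw [hgf hz, hgf' hz]
  exact ((hev.filter_mono nhdsWithin_le_nhds).frequently)

lemma subset_extSet (hs : IsOpen s) (hf : AnalyticOnNhd ℝ f₀ s) (hsc : IsPreconnected s) :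
    s ⊆ ExtSet f₀ s :=
  fun y hy => ⟨s, f₀, ⟨hs, hsc, subset_rfl, hf, fun _ _ => rfl⟩, hy⟩

lemma isOpen_extSet : IsOpen (ExtSet f₀ s) := by
  rw [isOpen_iff_mem_nhds]
  rintro y ⟨V, g, w, hyV⟩
  filter_upwards [w.1.mem_nhds hyV] with z hz
  exact ⟨V, g, w, hz⟩

lemma isPreconnected_extSet (hy₀ : y₀ ∈ s) : IsPreconnected (ExtSet f₀ s) := by
  have h : ExtSet f₀ s = ⋃₀ {V | ∃ g, IsWit f₀ s V g} := by
    ext y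
    constructor
    · rintro ⟨V, g, w, hyV⟩; exact ⟨V, ⟨g, w⟩, hyV⟩
    · rintro ⟨V, ⟨g, w⟩, hyV⟩; exact ⟨V, g, w, hyV⟩
  rw [h]
  apply isPreconnected_sUnion y₀
  · rintro V ⟨g, w⟩; exact w.2.2.1 hy₀
  · rintro V ⟨g, w⟩; exact w.2.1

lemma extFun_eqOn_wit (hs : IsOpen s) (hy₀ : y₀ ∈ s) {V g} (w : IsWit f₀ s V g) :
    EqOn (extFun f₀ s) g V := by
  intro y hyV
  have hy : y ∈ ExtSet f₀ s := ⟨V, g, w, hyV⟩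
  unfold extFun
  rw [dif_pos hy]
  exact wit_eqOn hs hy₀ hy.choose_spec.choose_spec.1 w ⟨hy.choose_spec.choose_spec.2, hyV⟩

lemma extFun_eqOn_base (hs : IsOpen s) (hy₀ : y₀ ∈ s) (hf : AnalyticOnNhd ℝ f₀ s)
    (hsc : IsPreconnected s) : EqOn (extFun f₀ s) f₀ s := by
  intro y hy
  exact extFun_eqOn_wit hs hy₀ ⟨hs, hsc, subset_rfl, hf, fun _ _ => rfl⟩ hy

lemma analyticOnNhd_extFun (hs : IsOpen s) (hy₀ : y₀ ∈ s) :
    AnalyticOnNhd ℝ (extFun f₀ s) (ExtSet f₀ s) := by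
  rintro y ⟨V, g, w, hyV⟩
  refine (w.2.2.2.1 y hyV).congr ?_
  filter_upwards [w.1.mem_nhds hyV] with z hz
  exact (extFun_eqOn_wit hs hy₀ w hz).symm

/-- Gluing: an analytic function on an open preconnected set agreeing with the extension
near one common point pushes the extension set outward. -/
lemma extSet_glue (hs : IsOpen s) (hy₀ : y₀ ∈ s) (hf : AnalyticOnNhd ℝ f₀ s)
    (hsc : IsPreconnected s)
    {W : Set ℝ} {G : ℝ → ℝ} (hWo : IsOpen W) (hWc : IsPreconnected W)
    (hGa : AnalyticOnNhd ℝ G W) {y₁ : ℝ} (hy₁W : y₁ ∈ W) (hy₁E : y₁ ∈ ExtSet f₀ s)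
    (hGF : G =ᶠ[nhds y₁] extFun f₀ s) : W ⊆ ExtSet f₀ s := by
  classical
  have hinter : EqOn G (extFun f₀ s) (W ∩ ExtSet f₀ s) := by
    have hIc : IsPreconnected (W ∩ ExtSet f₀ s) :=
      (hWc.ordConnected.inter (isPreconnected_extSet hy₀).ordConnected).isPreconnected
    exact AnalyticOnNhd.eqOn_of_preconnected_of_frequently_eq
      (fun y hy => hGa y hy.1) (fun y hy => analyticOnNhd_extFun hs hy₀ y hy.2)
      hIc ⟨hy₁W, hy₁E⟩ ((hGF.filter_mono nhdsWithin_le_nhds).frequently)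
  set g' : ℝ → ℝ := fun y => if y ∈ ExtSet f₀ s then extFun f₀ s y else G y with hg'
  have hg'G : EqOn g' G W := by
    intro y hyW
    by_cases hy : y ∈ ExtSet f₀ s
    · simp only [hg', if_pos hy]; exact (hinter ⟨hyW, hy⟩).symm
    · simp only [hg', if_neg hy]
  have hg'F : EqOn g' (extFun f₀ s) (ExtSet f₀ s) := fun y hy => by
    simp only [hg', if_pos hy]
  have hwit : IsWit f₀ s (W ∪ ExtSet f₀ s) g' := by
    refine ⟨hWo.union (isOpen_extSet), ?_, ?_, ?_, ?_⟩
    · exact IsPreconnected.union y₁ hy₁W hy₁E hWc (isPreconnected_extSet hy₀)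
    · exact fun y hy => Or.inr (subset_extSet hs hf hsc hy)
    · rintro y (hyW | hyE)
      · refine ((hGa y hyW).congr ?_)
        filter_upwards [hWo.mem_nhds hyW] with z hz using (hg'G hz).symm
      · refine ((analyticOnNhd_extFun hs hy₀ y hyE).congr ?_)
        filter_upwards [(isOpen_extSet).mem_nhds hyE] with z hz using (hg'F hz).symm
    · intro y hy
      rw [hg'F (subset_extSet hs hf hsc hy)]
      exact extFun_eqOn_base hs hy₀ hf hsc hy
  exact fun y hyW => ⟨_, g', hwit, Or.inl hyW⟩

/-- A closure point of the extension set which is not in it lies (one-sidedly) above or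
below all of it. -/
lemma extSet_side (hy₀ : y₀ ∈ s) {e : ℝ} (he : e ∉ ExtSet f₀ s) :
    ExtSet f₀ s ⊆ Iio e ∨ ExtSet f₀ s ⊆ Ioi e := by
  have hsub : ExtSet f₀ s ⊆ Iio e ∪ Ioi e := by
    intro y hy
    rcases lt_trichotomy y e with h | h | h
    · exact Or.inl h
    · exact absurd (h ▸ hy) he
    · exact Or.inr h
  rcases (isPreconnected_extSet hy₀).subset_or_subset isOpen_Iio isOpen_Ioi
    (by rw [disjoint_iff_inter_eq_empty]; ext z; simp; intro h1; exact le_of_lt h1) hsub with h | h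
  · exact Or.inl h
  · exact Or.inr h

/-- If `e` is in the closure of the extension set from below, an interval `(e-δ, e)` lies in it. -/
lemma extSet_inner_Iio (hy₀ : y₀ ∈ s) {e : ℝ} (hside : ExtSet f₀ s ⊆ Iio e)
    (hecl : e ∈ closure (ExtSet f₀ s)) : ∃ δ > 0, Ioo (e - δ) e ⊆ ExtSet f₀ s := by
  obtain ⟨y₁, hy₁, hy₁d⟩ := Metric.mem_closure_iff.1 hecl 1 one_pos
  refine ⟨e - y₁, by have := hside hy₁; simp at this ⊢; linarith, ?_⟩
  intro z hz
  simp only [mem_Ioo, sub_sub_cancel] at hz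
  obtain ⟨y₂, hy₂, hy₂d⟩ := Metric.mem_closure_iff.1 hecl (e - z) (by linarith [hz.2])
  have hy₂z : z < y₂ := by
    have := abs_lt.1 (by simpa [Real.dist_eq] using hy₂d)
    linarith [this.1]
  have hOC : OrdConnected (ExtSet f₀ s) := (isPreconnected_extSet hy₀).ordConnected
  exact hOC.out hy₁ hy₂ ⟨le_of_lt hz.1, le_of_lt hy₂z⟩

lemma extSet_inner_Ioi (hy₀ : y₀ ∈ s) {e : ℝ} (hside : ExtSet f₀ s ⊆ Ioi e)
    (hecl : e ∈ closure (ExtSet f₀ s)) : ∃ δ > 0, Ioo e (e + δ) ⊆ ExtSet f₀ s := by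
  obtain ⟨y₁, hy₁, hy₁d⟩ := Metric.mem_closure_iff.1 hecl 1 one_pos
  refine ⟨y₁ - e, by have := hside hy₁; simp at this ⊢; linarith, ?_⟩
  intro z hz
  simp only [mem_Ioo, add_sub_cancel] at hz
  obtain ⟨y₂, hy₂, hy₂d⟩ := Metric.mem_closure_iff.1 hecl (z - e) (by linarith [hz.1])
  have hy₂z : y₂ < z := by
    have := abs_lt.1 (by simpa [Real.dist_eq] using hy₂d)
    linarith [this.2]
  have hOC : OrdConnected (ExtSet f₀ s) := (isPreconnected_extSet hy₀).ordConnected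
  exact hOC.out hy₂ hy₁ ⟨le_of_lt hy₂z, le_of_lt hz.2⟩

end OneDim

open Set Metric


lemma chart_exists {φ₁ φ₂ : E2 → ℝ} {x : E2}
    (h1 : AnalyticAt ℝ φ₁ x) (h2 : AnalyticAt ℝ φ₂ x)
    (hind : LinearIndependent ℝ ![fderiv ℝ φ₁ x, fderiv ℝ φ₂ x])
    {s : Set E2} (hs : s ∈ nhds x) :
    ∃ (ψ : ℝ × ℝ → E2) (ε : ℝ), 0 < ε ∧
      (∀ y ∈ ball ((φ₁ x, φ₂ x) : ℝ × ℝ) ε,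
        AnalyticAt ℝ ψ y ∧ ψ y ∈ s ∧ φ₁ (ψ y) = y.1 ∧ φ₂ (ψ y) = y.2) ∧
      (∀ᶠ z in nhds x, (φ₁ z, φ₂ z) ∈ ball ((φ₁ x, φ₂ x) : ℝ × ℝ) ε ∧ ψ (φ₁ z, φ₂ z) = z) := by
  set L₁ := fderiv ℝ φ₁ x with hL₁
  set L₂ := fderiv ℝ φ₂ x with hL₂
  set Φ : E2 → ℝ × ℝ := fun z => (φ₁ z, φ₂ z) with hΦ
  have hΦa : AnalyticAt ℝ Φ x := h1.prod h2
  set A₀ : E2 →L[ℝ] ℝ × ℝ := L₁.prod L₂ with hA₀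
  -- injectivity of the derivative
  have hker : ∀ v : E2, A₀ v = 0 → v = 0 := by
    intro v hv
    have hv1 : L₁ v = 0 := congrArg Prod.fst hv
    have hv2 : L₂ v = 0 := congrArg Prod.snd hv
    have hind2 : LinearIndependent ℝ
        (fun i => ((![L₁, L₂] i : E2 →L[ℝ] ℝ) : E2 →ₗ[ℝ] ℝ)) := by
      apply hind.map' (ContinuousLinearMap.coeLM ℝ)
      rw [LinearMap.ker_eq_bot]
      exact fun f g hfg => ContinuousLinearMap.coe_injective hfg
    have hspan : Submodule.span ℝ
        (Set.range (fun i => ((![L₁, L₂] i : E2 →L[ℝ] ℝ) : E2 →ₗ[ℝ] ℝ))) = ⊤ := by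
      apply hind2.span_eq_top_of_card_eq_finrank
      rw [Fintype.card_fin]
      exact ((Subspace.dual_finrank_eq (K := ℝ) (V := E2)).trans finrank_euclideanSpace_fin).symm
    rw [← Module.forall_dual_apply_eq_zero_iff (R := ℝ)]
    intro ψd
    have hmem : ψd ∈ Submodule.span ℝ
        (Set.range (fun i => ((![L₁, L₂] i : E2 →L[ℝ] ℝ) : E2 →ₗ[ℝ] ℝ))) := by
      rw [hspan]; trivial
    induction hmem using Submodule.span_induction with
    | mem u hu =>
      obtain ⟨i, rfl⟩ := hu
      fin_cases i
      · simpa using hv1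
      · simpa using hv2
    | zero => simp
    | add u w _ _ hu hw => simp [hu, hw]
    | smul c u _ hu => simp [hu]
  have hinj : Function.Injective A₀.toLinearMap := by
    rw [← LinearMap.ker_eq_bot, LinearMap.ker_eq_bot']
    intro v hv
    exact hker v hv
  have hdim : Module.finrank ℝ E2 = Module.finrank ℝ (ℝ × ℝ) := by
    simp [finrank_euclideanSpace_fin]
  set A : E2 ≃L[ℝ] ℝ × ℝ :=
    (A₀.toLinearMap.linearEquivOfInjective hinj hdim).toContinuousLinearEquiv with hA
  have hAeq : (A : E2 →L[ℝ] ℝ × ℝ) = A₀ := by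
    refine ContinuousLinearMap.ext fun v => ?_
    show A v = A₀ v
    rw [hA]
    simp [LinearMap.linearEquivOfInjective_apply]
  -- strict derivative
  have hstrict : HasStrictFDerivAt Φ (A : E2 →L[ℝ] ℝ × ℝ) x := by
    rw [hAeq]
    exact HasStrictFDerivAt.prodMk (h1.hasStrictFDerivAt) (h2.hasStrictFDerivAt)
  set P := HasStrictFDerivAt.toOpenPartialHomeomorph (hf := hstrict) Φ with hP
  have hxP : x ∈ P.source := HasStrictFDerivAt.mem_toOpenPartialHomeomorph_source hstrict
  have hPcoe : (P : E2 → ℝ × ℝ) = Φ := HasStrictFDerivAt.toOpenPartialHomeomorph_coe hstrict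
  obtain ⟨p, hp⟩ := hΦa
  have hfd : (continuousMultilinearCurryFin1 ℝ E2 (ℝ × ℝ)) (p 1) = (A : E2 →L[ℝ] ℝ × ℝ) := by
    rw [← hp.fderiv_eq]
    exact (HasStrictFDerivAt.hasFDerivAt hstrict).fderiv
  have hp1 : p 1 = (continuousMultilinearCurryFin1 ℝ E2 (ℝ × ℝ)).symm (A : E2 →L[ℝ] ℝ × ℝ) := by
    rw [← hfd]
    exact (LinearIsometryEquiv.symm_apply_apply _ _).symm
  have hpP : HasFPowerSeriesAt (P : E2 → ℝ × ℝ) p x := by rw [hPcoe]; exact hp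
  have hsymm := P.hasFPowerSeriesAt_symm hxP hpP hp1
  have hPx : (P : E2 → ℝ × ℝ) x = Φ x := by rw [hPcoe]
  have hψa : AnalyticAt ℝ (P.symm : ℝ × ℝ → E2) (Φ x) := by
    rw [← hPx]; exact ⟨_, hsymm⟩
  -- choose ε
  have hXtgt : Φ x ∈ P.target := by
    rw [← hPx]; exact P.map_source hxP
  have hsymmx : P.symm (Φ x) = x := by
    rw [← hPx]; exact P.left_inv hxP
  have hev : ∀ᶠ y in nhds (Φ x), AnalyticAt ℝ (P.symm : ℝ × ℝ → E2) y ∧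
      P.symm y ∈ s ∧ y ∈ P.target := by
    have e1 : ∀ᶠ y in nhds (Φ x), AnalyticAt ℝ (P.symm : ℝ × ℝ → E2) y :=
      hψa.eventually_analyticAt
    have e2 : ∀ᶠ y in nhds (Φ x), P.symm y ∈ s := by
      have hc : ContinuousAt (P.symm : ℝ × ℝ → E2) (Φ x) := P.continuousAt_symm hXtgt
      exact hc (by rw [hsymmx]; exact hs)
    have e3 : ∀ᶠ y in nhds (Φ x), y ∈ P.target := P.open_target.mem_nhds hXtgt
    filter_upwards [e1, e2, e3] with y hy1 hy2 hy3
    exact ⟨hy1, hy2, hy3⟩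
  obtain ⟨ε, hε, hball⟩ := Metric.eventually_nhds_iff_ball.1 hev
  refine ⟨P.symm, ε, hε, ?_, ?_⟩
  · intro y hy
    obtain ⟨hy1, hy2, hy3⟩ := hball y hy
    have hΦψ : Φ (P.symm y) = y := by
      rw [← hPcoe]; exact P.right_inv hy3
    exact ⟨hy1, hy2, congrArg Prod.fst hΦψ, congrArg Prod.snd hΦψ⟩
  · have e4 : ∀ᶠ z in nhds x, Φ z ∈ ball (Φ x) ε :=
      (h1.prod h2).continuousAt (ball_mem_nhds _ hε)
    have e5 : ∀ᶠ z in nhds x, z ∈ P.source := P.open_source.mem_nhds hxP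
    filter_upwards [e4, e5] with z hz1 hz2
    refine ⟨hz1, ?_⟩
    have : P.symm (P z) = z := P.left_inv hz2
    rwa [hPcoe] at this

open Set Metric Filter
open scoped RealInnerProductSpace


/-- At a maximum point of a differentiable function over a closed ball, the derivative is a
nonnegative multiple of the inner product with the outward direction. -/
lemma fderiv_maxOn_closedBall {g : E2 → ℝ} {L : E2 →L[ℝ] ℝ} {c z : E2} {R : ℝ} (hR : 0 < R)
    (hz : z ∈ closedBall c R) (hmax : ∀ w ∈ closedBall c R, g w ≤ g z)
    (hd : HasFDerivAt g L z) :
    ∃ lam : ℝ, 0 ≤ lam ∧ L = lam • (innerSL ℝ (z - c)) := by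
  rcases lt_or_eq_of_le (mem_closedBall.1 hz) with hlt | heq
  · -- interior maximum
    refine ⟨0, le_refl 0, ?_⟩
    have hloc : IsLocalMax g z := by
      filter_upwards [Metric.ball_mem_nhds z (by linarith : (0:ℝ) < R - dist z c)] with w hw
      apply hmax
      rw [mem_closedBall]
      have h1 : dist w z < R - dist z c := mem_ball.1 hw
      calc dist w c ≤ dist w z + dist z c := dist_triangle w z c
        _ ≤ (R - dist z c) + dist z c := by linarith
        _ = R := by ring
    have h0 : fderiv ℝ g z = 0 := hloc.fderiv_eq_zero
    rw [← hd.fderiv, h0]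
    simp
  · -- boundary maximum
    set n := z - c with hn
    have hnnorm : ‖n‖ = R := by rw [hn, ← dist_eq_norm]; exact heq
    have hnne : (0:ℝ) < ‖n‖ ^ 2 := by rw [hnnorm]; positivity
    -- Step 1: inward directions have nonpositive derivative
    have key : ∀ w : E2, ⟪n, w⟫ < 0 → L w ≤ 0 := by
      intro w hw
      by_contra hpos
      push_neg at hpos
      have hcurve : HasDerivAt (fun t : ℝ => z + t • w) w 0 := by
        have h₁ : HasDerivAt (fun t : ℝ => t • w) ((1:ℝ) • w) 0 :=
          (hasDerivAt_id (0:ℝ)).smul_const w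
        simpa using h₁.const_add z
      have hφ : HasDerivAt (fun t : ℝ => g (z + t • w)) (L w) 0 := by
        have hd' : HasFDerivAt g L ((fun t : ℝ => z + t • w) 0) := by simpa using hd
        have h2 := hd'.comp_hasDerivAt 0 hcurve
        exact h2
      set t₁ : ℝ := -⟪n, w⟫ / (‖w‖ ^ 2 + 1) with ht₁
      have ht₁pos : 0 < t₁ := div_pos (by linarith) (by positivity)
      have hmem : ∀ t : ℝ, 0 < t → t < t₁ → z + t • w ∈ closedBall c R := by
        intro t ht0 htt
        have hwn : t * (‖w‖ ^ 2 + 1) < -⟪n, w⟫ := by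
          have h3 : t * (‖w‖ ^ 2 + 1) < t₁ * (‖w‖ ^ 2 + 1) :=
            mul_lt_mul_of_pos_right htt (by positivity)
          rwa [ht₁, div_mul_cancel₀] at h3
          positivity
        have hsq : ‖n + t • w‖ ^ 2 < R ^ 2 := by
          rw [norm_add_sq_real, real_inner_smul_right]
          have h4 : ‖t • w‖ ^ 2 = t ^ 2 * ‖w‖ ^ 2 := by
            rw [norm_smul]; rw [mul_pow]; simp [sq_abs]
          rw [h4]
          have h5 : ‖n‖ ^ 2 = R ^ 2 := by rw [hnnorm]
          nlinarith [sq_nonneg t]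
        rw [mem_closedBall, dist_eq_norm]
        have h6 : z + t • w - c = n + t • w := by rw [hn]; abel
        rw [h6]
        exact le_of_lt (lt_of_pow_lt_pow_left₀ 2 (le_of_lt hR) hsq)
      -- derive contradiction from positive derivative
      have hT : Tendsto (slope (fun t : ℝ => g (z + t • w)) 0) (nhdsWithin 0 {(0:ℝ)}ᶜ)
          (nhds (L w)) := hasDerivAt_iff_tendsto_slope.1 hφ
      have hT' : Tendsto (slope (fun t : ℝ => g (z + t • w)) 0) (nhdsWithin 0 (Ioi 0))
          (nhds (L w)) := hT.mono_left (nhdsWithin_mono 0 (fun x hx => ne_of_gt hx))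
      have hev1 : ∀ᶠ t in nhdsWithin (0:ℝ) (Ioi 0),
          0 < slope (fun t : ℝ => g (z + t • w)) 0 t :=
        hT'.eventually_const_lt hpos
      have hev2 : ∀ᶠ t in nhdsWithin (0:ℝ) (Ioi 0), t < t₁ :=
        eventually_nhdsWithin_of_eventually_nhds (eventually_lt_nhds ht₁pos)
      have hev3 : ∀ᶠ t in nhdsWithin (0:ℝ) (Ioi 0), (0:ℝ) < t := self_mem_nhdsWithin
      obtain ⟨t, hts, htt₁, ht0⟩ := (hev1.and (hev2.and hev3)).exists
      have hslope : (g (z + t • w) - g (z + (0:ℝ) • w)) / t = slope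
          (fun t : ℝ => g (z + t • w)) 0 t := by
        rw [slope_def_field]; ring_nf
      have hgt : g z < g (z + t • w) := by
        have h7 : 0 < (g (z + t • w) - g (z + (0:ℝ) • w)) / t := by rw [hslope]; exact hts
        have h8 : 0 < g (z + t • w) - g (z + (0:ℝ) • w) := by
          rcases div_pos_iff.1 h7 with ⟨h, _⟩ | ⟨_, h⟩
          · exact h
          · linarith
        simpa using h8
      exact absurd (hmax _ (hmem t ht0 htt₁)) (not_le.2 hgt)
    -- Step 2: orthogonal directions have zero derivative
    have hLn : 0 ≤ L n := by
      have h9 : ⟪n, -n⟫ < 0 := by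
        rw [inner_neg_right, real_inner_self_eq_norm_sq]; linarith
      have := key (-n) h9
      rw [map_neg] at this; linarith
    have key0 : ∀ w : E2, ⟪n, w⟫ = 0 → L w = 0 := by
      have hhalf : ∀ w : E2, ⟪n, w⟫ = 0 → L w ≤ 0 := by
        intro w hw
        have hup : ∀ ε : ℝ, 0 < ε → L w ≤ ε * L n := by
          intro ε hε
          have h10 : ⟪n, w - ε • n⟫ < 0 := by
            rw [inner_sub_right, real_inner_smul_right, real_inner_self_eq_norm_sq, hw]
            nlinarith
          have h11 := key _ h10
          rw [map_sub, _root_.map_smul] at h11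
          simp only [smul_eq_mul] at h11
          linarith
        have hTT : Tendsto (fun ε : ℝ => ε * L n) (nhdsWithin 0 (Ioi 0)) (nhds 0) := by
          have hcont : Continuous (fun ε : ℝ => ε * L n) := continuous_id.mul continuous_const
          have h14 := (hcont.tendsto (0:ℝ)).mono_left (nhdsWithin_le_nhds (s := Ioi (0:ℝ)))
          simpa using h14
        exact ge_of_tendsto hTT (eventually_nhdsWithin_of_forall (fun ε hε => hup ε hε))
      intro w hw
      have h12 := hhalf w hw
      have h13 := hhalf (-w) (by rw [inner_neg_right, hw]; ring)
      rw [map_neg] at h13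
      linarith
    -- Step 3: conclude
    refine ⟨L n / ‖n‖ ^ 2, div_nonneg hLn (le_of_lt hnne), ?_⟩
    refine ContinuousLinearMap.ext fun v => ?_
    have hw : ⟪n, v - (⟪n, v⟫ / ‖n‖ ^ 2) • n⟫ = 0 := by
      rw [inner_sub_right, real_inner_smul_right, real_inner_self_eq_norm_sq]
      rw [div_mul_cancel₀ _ hnne.ne', sub_self]
    have h0 := key0 _ hw
    rw [map_sub, _root_.map_smul] at h0
    simp only [smul_eq_mul] at h0
    have hLv : L v = ⟪n, v⟫ / ‖n‖ ^ 2 * L n := by linarith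
    rw [hLv]
    simp only [ContinuousLinearMap.smul_apply, innerSL_apply_apply, smul_eq_mul]
    ring

/-- Observation 12.3: local real analytic solutions of
`a₁·(f₁∘φ₁) + a₂·(f₂∘φ₂) + a₃·(f₃∘φ₃) = 0` extend analytically to `φⱼ(B)`. -/
theorem analytic_continuation_of_solutions
    (x₀ : EuclideanSpace ℝ (Fin 2)) (r : ℝ) (hr : 0 < r)
    (Bt : Set (EuclideanSpace ℝ (Fin 2))) (hBtOpen : IsOpen Bt) (hBtConn : IsConnected Bt)
    (hBBt : Metric.closedBall x₀ r ⊆ Bt)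
    (a φ : Fin 3 → EuclideanSpace ℝ (Fin 2) → ℝ)
    (ha : ∀ j, AnalyticOnNhd ℝ (a j) Bt)
    (hφ : ∀ j, AnalyticOnNhd ℝ (φ j) Bt)
    (haNz : ∀ j, ∀ x ∈ Bt, a j x ≠ 0)
    (hInd : ∀ i j : Fin 3, i ≠ j → ∀ x ∈ Bt,
      LinearIndependent ℝ ![fderiv ℝ (φ i) x, fderiv ℝ (φ j) x])
    (U : Set (EuclideanSpace ℝ (Fin 2)))
    (hU : U ⊆ interior (Metric.closedBall x₀ r))
    (hUopen : IsOpen U) (hUne : U.Nonempty) (hUconn : IsConnected U)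
    (f : Fin 3 → ℝ → ℝ)
    (hf : ∀ j, AnalyticOnNhd ℝ (f j) (φ j '' U))
    (heq : ∀ x ∈ U, ∑ j, a j x * f j (φ j x) = 0) :
    ∀ j, ∃ (F : ℝ → ℝ) (O : Set ℝ),
      IsOpen O ∧ φ j '' Metric.closedBall x₀ r ⊆ O ∧
      AnalyticOnNhd ℝ F O ∧ ∀ y ∈ φ j '' U, F y = f j y := by
  obtain ⟨u₀, hu₀U⟩ := hUne
  have hUB : U ⊆ Metric.closedBall x₀ r := hU.trans interior_subset
  have hUBt : U ⊆ Bt := hUB.trans hBBt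
  have hu₀Bt : u₀ ∈ Bt := hUBt hu₀U
  -- Fin 3 index facts
  have hne1 : ∀ j : Fin 3, j ≠ j + 1 := by decide
  have hne2 : ∀ j : Fin 3, j ≠ j + 2 := by decide
  have hsum3 : ∀ (j : Fin 3) (g : Fin 3 → ℝ), (∑ l, g l) = g j + g (j + 1) + g (j + 2) := by
    intro j g
    fin_cases j <;> simp [Fin.sum_univ_three] <;> ring
  -- images of U
  have hsne : ∀ j : Fin 3, φ j u₀ ∈ φ j '' U := fun j => ⟨u₀, hu₀U, rfl⟩
  have hsconn : ∀ j : Fin 3, IsPreconnected (φ j '' U) := by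
    intro j
    exact hUconn.isPreconnected.image _
      (fun z hz => ((hφ j) z (hUBt hz)).continuousAt.continuousWithinAt)
  -- the image of a neighborhood under φ j is a neighborhood
  have himg : ∀ (j : Fin 3) (x : E2), x ∈ Bt → ∀ t ∈ nhds x, φ j '' t ∈ nhds (φ j x) := by
    intro j x hxBt t ht
    obtain ⟨ψ, ε, hε, hball, _⟩ := chart_exists ((hφ j) x hxBt) ((hφ (j+1)) x hxBt)
      (hInd j (j+1) (hne1 j) x hxBt) ht
    rw [Metric.mem_nhds_iff]
    refine ⟨ε, hε, fun u hu => ?_⟩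
    have hmem : ((u, φ (j+1) x) : ℝ × ℝ) ∈ ball ((φ j x, φ (j+1) x) : ℝ × ℝ) ε := by
      rw [mem_ball, Prod.dist_eq]
      simp only [dist_self]
      exact max_lt (mem_ball.1 hu) hε
    obtain ⟨_, hmem_t, hco1, _⟩ := hball _ hmem
    exact ⟨ψ (u, φ (j+1) x), hmem_t, hco1⟩
  have hsopen : ∀ j : Fin 3, IsOpen (φ j '' U) := by
    intro j
    rw [isOpen_iff_mem_nhds]
    rintro y ⟨z, hzU, rfl⟩
    exact himg j z (hUBt hzU) U (hUopen.mem_nhds hzU)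
  -- the extension sets and functions
  set I : Fin 3 → Set ℝ := fun j => ExtSet (f j) (φ j '' U) with hI
  set F : Fin 3 → ℝ → ℝ := fun j => extFun (f j) (φ j '' U) with hF
  have hsI : ∀ j, φ j '' U ⊆ I j := fun j => subset_extSet (hsopen j) (hf j) (hsconn j)
  have hIopen : ∀ j, IsOpen (I j) := fun j => isOpen_extSet
  have hFanal : ∀ j, AnalyticOnNhd ℝ (F j) (I j) :=
    fun j => analyticOnNhd_extFun (hsopen j) (hsne j)
  have hFbase : ∀ j, EqOn (F j) (f j) (φ j '' U) :=
    fun j => extFun_eqOn_base (hsopen j) (hsne j) (hf j) (hsconn j)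
  -- the good open set Ω and the component C of u₀
  set Ω : Set E2 := {z | z ∈ Bt ∧ ∀ l : Fin 3, φ l z ∈ I l} with hΩ
  have hΩopen : IsOpen Ω := by
    rw [isOpen_iff_mem_nhds]
    rintro z ⟨hzBt, hzI⟩
    have e0 : ∀ l : Fin 3, ∀ᶠ z' in nhds z, φ l z' ∈ I l := fun l =>
      ((hφ l) z hzBt).continuousAt ((hIopen l).mem_nhds (hzI l))
    filter_upwards [hBtOpen.mem_nhds hzBt, e0 0, e0 1, e0 2] with z' h0 h1 h2 h3
    exact ⟨h0, fun l => by fin_cases l <;> assumption⟩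
  have hUΩ : U ⊆ Ω := fun z hz => ⟨hUBt hz, fun l => hsI l ⟨z, hz, rfl⟩⟩
  set C : Set E2 := connectedComponentIn Ω u₀ with hC
  have hCopen : IsOpen C := hΩopen.connectedComponentIn
  have hCconn : IsPreconnected C := isPreconnected_connectedComponentIn
  have hu₀C : u₀ ∈ C := mem_connectedComponentIn (hUΩ hu₀U)
  have hUC : U ⊆ C := hUconn.isPreconnected.subset_connectedComponentIn hu₀U hUΩ
  have hCΩ : C ⊆ Ω := connectedComponentIn_subset _ _
  have hCBt : C ⊆ Bt := fun z hz => (hCΩ hz).1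
  -- the analytic identity on C
  have hh0 : EqOn (fun z => ∑ l, a l z * F l (φ l z)) 0 C := by
    have hana : AnalyticOnNhd ℝ (fun z => ∑ l, a l z * F l (φ l z)) C := by
      intro z hz
      apply Finset.analyticAt_fun_sum
      intro l _
      exact ((ha l) z (hCBt hz)).mul
        (((hFanal l) _ ((hCΩ hz).2 l)).comp ((hφ l) z (hCBt hz)))
    have hev0 : (fun z => ∑ l, a l z * F l (φ l z)) =ᶠ[nhds u₀] 0 := by
      filter_upwards [hUopen.mem_nhds hu₀U] with z hz
      have h1 : ∑ l, a l z * F l (φ l z) = ∑ l, a l z * f l (φ l z) :=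
        Finset.sum_congr rfl fun l _ => by rw [hFbase l ⟨z, hz, rfl⟩]
      show ∑ l, a l z * F l (φ l z) = 0
      rw [h1]
      exact heq z hz
    exact AnalyticOnNhd.eqOn_zero_of_preconnected_of_eventuallyEq_zero hana hCconn hu₀C hev0
  -- KEY STEP: at any closure point of C whose other two coordinates are interior,
  -- the remaining coordinate also lies in the extension set
  have key : ∀ x ∈ Bt, x ∈ closure C → ∀ j : Fin 3,
      (∀ i : Fin 3, i ≠ j → φ i x ∈ I i) → φ j x ∈ I j := by
    intro x hxBt hxcl j hothers
    set i : Fin 3 := j + 1 with hi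
    set k : Fin 3 := j + 2 with hk
    have hiI : φ i x ∈ I i := hothers i (hne1 j).symm
    have hkI : φ k x ∈ I k := hothers k (hne2 j).symm
    set e : ℝ := φ j x with he
    set b : ℝ := φ i x with hb
    have hecl : e ∈ closure (I j) := by
      have h1 : φ j x ∈ closure (φ j '' C) :=
        ((hφ j) x hxBt).continuousAt.continuousWithinAt.mem_closure_image hxcl
      refine closure_mono ?_ h1
      rintro _ ⟨z, hz, rfl⟩
      exact (hCΩ hz).2 j
    -- target set for the chart
    have hT : {z : E2 | z ∈ Bt ∧ φ k z ∈ I k ∧ φ i z ∈ I i} ∈ nhds x := by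
      have e1 : ∀ᶠ z in nhds x, φ k z ∈ I k :=
        ((hφ k) x hxBt).continuousAt ((hIopen k).mem_nhds hkI)
      have e2 : ∀ᶠ z in nhds x, φ i z ∈ I i :=
        ((hφ i) x hxBt).continuousAt ((hIopen i).mem_nhds hiI)
      filter_upwards [hBtOpen.mem_nhds hxBt, e1, e2] with z h1 h2 h3
      exact ⟨h1, h2, h3⟩
    obtain ⟨ψ, ε, hε, hball, hev⟩ := chart_exists ((hφ j) x hxBt) ((hφ i) x hxBt)
      (hInd j i (hne1 j) x hxBt) hT
    -- pick p ∈ C in the chart neighborhood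
    obtain ⟨p, hpev, hpC⟩ : ∃ p, ((φ j p, φ i p) ∈ ball ((e, b) : ℝ × ℝ) ε ∧
        ψ (φ j p, φ i p) = p) ∧ p ∈ C := by
      have := mem_closure_iff_nhds.1 hxcl _ hev
      obtain ⟨p, hp1, hp2⟩ := this
      exact ⟨p, hp1, hp2⟩
    set up : ℝ := φ j p with hup
    set vp : ℝ := φ i p with hvp
    have hpΩ := hCΩ hpC
    have hupI : up ∈ I j := hpΩ.2 j
    have hvpI : vp ∈ I i := hpΩ.2 i
    have hdistp : dist up e < ε ∧ dist vp b < ε := by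
      have := mem_ball.1 hpev.1
      rw [Prod.dist_eq] at this
      exact ⟨lt_of_le_of_lt (le_max_left _ _) this, lt_of_le_of_lt (le_max_right _ _) this⟩
    -- membership of horizontal points in the ball
    have hmemball : ∀ u : ℝ, dist u e < ε → ((u, vp) : ℝ × ℝ) ∈ ball ((e, b) : ℝ × ℝ) ε := by
      intro u hu
      rw [mem_ball, Prod.dist_eq]
      exact max_lt hu hdistp.2
    -- the extension candidate along the horizontal line
    set G : ℝ → ℝ := fun u => -(a i (ψ (u, vp)) * F i (φ i (ψ (u, vp))) +
      a k (ψ (u, vp)) * F k (φ k (ψ (u, vp)))) / a j (ψ (u, vp)) with hG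
    set W : Set ℝ := Ioo (e - ε) (e + ε) with hW
    have hWmem : ∀ u ∈ W, dist u e < ε := by
      intro u hu
      rw [Real.dist_eq, abs_lt]
      exact ⟨by linarith [hu.1], by linarith [hu.2]⟩
    have hGanal : AnalyticOnNhd ℝ G W := by
      intro u hu
      obtain ⟨hψa, ⟨hψBt, hψk, hψi⟩, hco1, hco2⟩ := hball _ (hmemball u (hWmem u hu))
      have hinner : AnalyticAt ℝ (fun u' : ℝ => ((u', vp) : ℝ × ℝ)) u :=
        (analyticAt_id).prod analyticAt_const
      have hq : AnalyticAt ℝ (fun u' : ℝ => ψ (u', vp)) u := hψa.comp_of_eq hinner rfl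
      have hnum : AnalyticAt ℝ (fun u' : ℝ => -(a i (ψ (u', vp)) * F i (φ i (ψ (u', vp))) +
          a k (ψ (u', vp)) * F k (φ k (ψ (u', vp))))) u := by
        apply AnalyticAt.neg
        apply AnalyticAt.add
        · exact (((ha i) _ hψBt).comp_of_eq hq rfl).mul
            (((hFanal i) _ hψi).comp_of_eq (((hφ i) _ hψBt).comp_of_eq hq rfl) rfl)
        · exact (((ha k) _ hψBt).comp_of_eq hq rfl).mul
            (((hFanal k) _ hψk).comp_of_eq (((hφ k) _ hψBt).comp_of_eq hq rfl) rfl)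
      exact hnum.div (((ha j) _ hψBt).comp_of_eq hq rfl) (haNz j _ hψBt)
    -- horizontal points over I j ∩ W lie in C
    have hqC : ∀ u ∈ I j ∩ W, ψ (u, vp) ∈ C := by
      intro u hu
      have hIcc : ∀ u' ∈ Icc (min up u) (max up u), u' ∈ I j ∧ dist u' e < ε := by
        intro u' hu'
        constructor
        · apply (isPreconnected_extSet (hsne j)).ordConnected.out
            (min_rec' (· ∈ I j) hupI hu.1) (max_rec' (· ∈ I j) hupI hu.1) hu'
        · rw [Real.dist_eq, abs_lt]
          have h1 := abs_lt.1 (by rw [← Real.dist_eq]; exact hdistp.1)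
          have h2 := abs_lt.1 (by rw [← Real.dist_eq]; exact hWmem u hu.2)
          have hmin : min up u ≤ u' := hu'.1
          have hmax : u' ≤ max up u := hu'.2
          rcases le_total up u with hc | hc
          · rw [min_eq_left hc] at hmin; rw [max_eq_right hc] at hmax
            constructor <;> [linarith [h1.1]; linarith [h2.2]]
          · rw [min_eq_right hc] at hmin; rw [max_eq_left hc] at hmax
            constructor <;> [linarith [h2.1]; linarith [h1.2]]
      have hKΩ : ∀ u' ∈ Icc (min up u) (max up u), ψ (u', vp) ∈ Ω := by
        intro u' hu'
        obtain ⟨hu'I, hu'd⟩ := hIcc u' hu'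
        obtain ⟨hψa, ⟨hψBt, hψk, hψi⟩, hco1, hco2⟩ := hball _ (hmemball u' hu'd)
        refine ⟨hψBt, fun l => ?_⟩
        by_cases hl : l = j
        · subst hl; rwa [hco1]
        · by_cases hl2 : l = i
          · subst hl2; rwa [hco2]
          · have : l = k := by omega
            subst this; exact hψk
      have hKconn : IsPreconnected ((fun u' : ℝ => ψ (u', vp)) '' Icc (min up u) (max up u)) := by
        apply isPreconnected_Icc.image
        intro u' hu'
        obtain ⟨hψa, _, _, _⟩ := hball _ (hmemball u' (hIcc u' hu').2)
        have hinner : AnalyticAt ℝ (fun u'' : ℝ => ((u'', vp) : ℝ × ℝ)) u' :=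
          (analyticAt_id).prod analyticAt_const
        exact (hψa.comp_of_eq hinner rfl).continuousAt.continuousWithinAt
      have hKC : (fun u' : ℝ => ψ (u', vp)) '' Icc (min up u) (max up u) ⊆ C := by
        have hpmem : p ∈ (fun u' : ℝ => ψ (u', vp)) '' Icc (min up u) (max up u) := by
          refine ⟨up, ⟨min_le_left _ _, le_max_left _ _⟩, hpev.2⟩
        have himgΩ : (fun u' : ℝ => ψ (u', vp)) '' Icc (min up u) (max up u) ⊆ Ω := by
          rintro z ⟨u', hu', rfl⟩
          exact hKΩ u' hu'
        have hsub := hKconn.subset_connectedComponentIn hpmem himgΩ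
        rwa [← connectedComponentIn_eq hpC] at hsub
      exact hKC ⟨u, ⟨min_le_right _ _, le_max_right _ _⟩, rfl⟩
    -- on I j ∩ W, G agrees with F j
    have hGFeq : ∀ u ∈ I j ∩ W, G u = F j u := by
      intro u hu
      set q : E2 := ψ (u, vp) with hq
      obtain ⟨hψa, ⟨hψBt, hψk, hψi⟩, hco1, hco2⟩ := hball _ (hmemball u (hWmem u hu.2))
      have h0 := hh0 (hqC u hu)
      simp only [Pi.zero_apply] at h0
      rw [hsum3 j] at h0
      rw [hG]
      simp only
      rw [div_eq_iff (haNz j _ hψBt)]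
      rw [← hi, ← hk] at h0
      rw [hco1] at h0
      linarith [h0]
    -- glue
    have hy₁ : ∃ y₁, y₁ ∈ I j ∩ W := by
      obtain ⟨y₁, hy₁I, hy₁d⟩ := Metric.mem_closure_iff.1 hecl ε hε
      refine ⟨y₁, hy₁I, ?_⟩
      rw [hW, mem_Ioo]
      have := abs_lt.1 (by rw [← Real.dist_eq]; rw [dist_comm] at hy₁d; exact hy₁d)
      constructor <;> linarith [this.1, this.2]
    obtain ⟨y₁, hy₁⟩ := hy₁
    have hglue : W ⊆ I j := by
      apply extSet_glue (hsopen j) (hsne j) (hf j) (hsconn j) isOpen_Ioo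
        isPreconnected_Ioo hGanal hy₁.2 hy₁.1
      filter_upwards [((hIopen j).inter isOpen_Ioo).mem_nhds hy₁] with u hu
      exact hGFeq u hu
    apply hglue
    rw [hW, mem_Ioo]
    constructor <;> linarith [hε]

  -- SLIDING BALLS ARGUMENT
  set v₀ : E2 := x₀ - u₀ with hv₀
  have hv₀r : ‖v₀‖ ≤ r := by
    rw [hv₀, ← dist_eq_norm, dist_comm]
    exact mem_closedBall.1 (hUB hu₀U)
  set c : ℝ → E2 := fun t => u₀ + t • v₀ with hc
  set B : ℝ → Set E2 := fun t => Metric.closedBall (c t) (t * r) with hB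
  have hcdist : ∀ t t' : ℝ, dist (c t) (c t') ≤ |t - t'| * r := by
    intro t t'
    rw [hc, dist_eq_norm]
    have h1 : u₀ + t • v₀ - (u₀ + t' • v₀) = (t - t') • v₀ := by
      rw [sub_smul]; abel
    rw [h1, norm_smul, Real.norm_eq_abs]
    exact mul_le_mul_of_nonneg_left hv₀r (abs_nonneg _)
  have hmono : ∀ t t' : ℝ, 0 ≤ t → t ≤ t' → B t ⊆ B t' := by
    intro t t' ht htt' z hz
    have hz' : dist z (c t) ≤ t * r := hz
    show dist z (c t') ≤ t' * r
    calc dist z (c t') ≤ dist z (c t) + dist (c t) (c t') := dist_triangle _ _ _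
      _ ≤ t * r + |t - t'| * r := add_le_add hz' (hcdist t t')
      _ = t' * r := by rw [abs_of_nonpos (by linarith), neg_sub]; ring
  have hc1 : c 1 = x₀ := by rw [hc]; simp [hv₀]
  have hB1 : B 1 = Metric.closedBall x₀ r := by rw [hB]; simp [hc1]
  have hc0 : c 0 = u₀ := by rw [hc]; simp
  have hB0 : B 0 ⊆ C := by
    intro z hz
    have hz' : dist z (c 0) ≤ 0 * r := hz
    rw [zero_mul] at hz'
    have : z = c 0 := by rwa [← dist_le_zero]
    rw [this, hc0]
    exact hu₀C
  have hu₀B0 : u₀ ∈ B 0 := by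
    show dist u₀ (c 0) ≤ 0 * r
    rw [hc0, dist_self, zero_mul]
  have hBsub : ∀ t ∈ Icc (0:ℝ) 1, B t ⊆ Metric.closedBall x₀ r := fun t ht =>
    hB1 ▸ hmono t 1 ht.1 ht.2
  set S : Set ℝ := {t | t ∈ Icc (0:ℝ) 1 ∧ B t ⊆ C} with hS
  have h0S : (0:ℝ) ∈ S := ⟨⟨le_refl 0, zero_le_one⟩, hB0⟩
  have hSne : S.Nonempty := ⟨0, h0S⟩
  have hSbdd : BddAbove S := ⟨1, fun t ht => ht.1.2⟩
  set T : ℝ := sSup S with hT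
  have hT0 : 0 ≤ T := le_csSup hSbdd h0S
  have hT1 : T ≤ 1 := csSup_le hSne (fun t ht => ht.1.2)
  have hmemlt : ∀ t : ℝ, 0 ≤ t → t < T → B t ⊆ C := by
    intro t ht htT
    obtain ⟨t', ht'S, htt'⟩ := exists_lt_of_lt_csSup hSne htT
    exact (hmono t t' ht (le_of_lt htt')).trans ht'S.2
  have hBTB : B T ⊆ Metric.closedBall x₀ r := hBsub T ⟨hT0, hT1⟩
  have hBTBt : B T ⊆ Bt := hBTB.trans hBBt
  -- every point of B T is in the closure of C
  have hclosC : ∀ z ∈ B T, z ∈ closure C := by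
    intro z hz
    rcases eq_or_lt_of_le hT0 with hT0' | hTpos
    · rw [← hT0'] at hz
      exact subset_closure (hB0 hz)
    · have hcont : Continuous (fun t : ℝ => c t + (t / T) • (z - c T)) := by
        rw [hc]
        exact (continuous_const.add (continuous_id.smul continuous_const)).add
          ((continuous_id.div_const T).smul continuous_const)
      have htendsto : Tendsto (fun t : ℝ => c t + (t / T) • (z - c T))
          (nhdsWithin T (Iio T)) (nhds z) := by
        have h1 := (hcont.tendsto T).mono_left (nhdsWithin_le_nhds (s := Iio T))
        have h2 : c T + (T / T) • (z - c T) = z := by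
          rw [div_self (ne_of_gt hTpos), one_smul]; abel
        rwa [h2] at h1
      apply mem_closure_of_tendsto htendsto
      filter_upwards [Ioo_mem_nhdsLT_of_mem (⟨hTpos, le_refl T⟩ : T ∈ Ioc (0:ℝ) T)] with t ht
      apply hmemlt t (le_of_lt ht.1) ht.2
      show dist (c t + (t / T) • (z - c T)) (c t) ≤ t * r
      rw [dist_eq_norm]
      have h3 : c t + (t / T) • (z - c T) - c t = (t / T) • (z - c T) := by abel
      rw [h3, norm_smul, Real.norm_eq_abs,
        abs_of_nonneg (div_nonneg (le_of_lt ht.1) (le_of_lt hTpos))]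
      have h4 : ‖z - c T‖ ≤ T * r := by rw [← dist_eq_norm]; exact hz
      calc t / T * ‖z - c T‖ ≤ t / T * (T * r) :=
            mul_le_mul_of_nonneg_left h4 (div_nonneg (le_of_lt ht.1) (le_of_lt hTpos))
        _ = t * r := by field_simp
  have hcoordcl : ∀ z ∈ B T, ∀ l : Fin 3, φ l z ∈ closure (I l) := by
    intro z hz l
    have h1 : φ l z ∈ closure (φ l '' C) :=
      ((hφ l) z (hBTBt hz)).continuousAt.continuousWithinAt.mem_closure_image (hclosC z hz)
    refine closure_mono ?_ h1
    rintro _ ⟨w, hw, rfl⟩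
    exact (hCΩ hw).2 l
  -- all coordinates on B T lie in the extension sets
  have hgood : ∀ z ∈ B T, ∀ l : Fin 3, φ l z ∈ I l := by
    by_contra hbad
    push_neg at hbad
    obtain ⟨z, hzBT, l, hlI⟩ := hbad
    have hzBt : z ∈ Bt := hBTBt hzBT
    have hTpos : 0 < T := by
      rcases eq_or_lt_of_le hT0 with hT0' | h
      · exfalso
        rw [← hT0'] at hzBT
        have hz' : dist z (c 0) ≤ 0 * r := hzBT
        rw [zero_mul] at hz'
        have hzu : z = c 0 := by rwa [← dist_le_zero]
        rw [hzu, hc0] at hlI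
        exact hlI ((hUΩ hu₀U).2 l)
      · exact h
    have hTrpos : 0 < T * r := mul_pos hTpos hr
    have hextr : ∀ m : Fin 3, φ m z ∉ I m →
        ∃ μ : ℝ, fderiv ℝ (φ m) z = μ • (innerSL ℝ (z - c T)) := by
      intro m hm
      have hzBT' : z ∈ Metric.closedBall (c T) (T * r) := hzBT
      rcases extSet_side (hsne m) hm with hside | hside
      · -- max case
        have hmax : ∀ w ∈ Metric.closedBall (c T) (T * r), φ m w ≤ φ m z := by
          intro w hw
          have h6 := hcoordcl w hw m
          have h5 : closure (I m) ⊆ Iic (φ m z) := by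
            rw [← closure_Iio]; exact closure_mono hside
          exact h5 h6
        obtain ⟨lam, _, hlameq⟩ := fderiv_maxOn_closedBall hTrpos hzBT' hmax
          (((hφ m) z hzBt).differentiableAt.hasFDerivAt)
        exact ⟨lam, hlameq⟩
      · -- min case
        have hmin : ∀ w ∈ Metric.closedBall (c T) (T * r), -(φ m w) ≤ -(φ m z) := by
          intro w hw
          have h6 := hcoordcl w hw m
          have h5 : closure (I m) ⊆ Ici (φ m z) := by
            rw [← closure_Ioi]; exact closure_mono hside
          have := h5 h6
          simp only [mem_Ici] at this
          linarith
        obtain ⟨lam, _, hlameq⟩ := fderiv_maxOn_closedBall hTrpos hzBT' hmin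
          ((((hφ m) z hzBt).differentiableAt.hasFDerivAt).neg)
        exact ⟨-lam, by rw [neg_smul, ← hlameq, neg_neg]⟩
    obtain ⟨μl, hμl⟩ := hextr l hlI
    have hieq : ∀ m : Fin 3, m ≠ l → φ m z ∈ I m := by
      intro m hm
      by_contra hmI
      obtain ⟨μm, hμm⟩ := hextr m hmI
      have hli := hInd l m (Ne.symm hm) z hzBt
      rw [linearIndependent_fin2] at hli
      obtain ⟨h1, h2⟩ := hli
      simp only [Matrix.cons_val_one, Matrix.head_cons, Matrix.cons_val_zero] at h1 h2
      have hμm0 : μm ≠ 0 := by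
        intro h
        rw [h, zero_smul] at hμm
        exact h1 hμm
      apply h2 (μl / μm)
      rw [hμm, hμl, smul_smul, div_mul_cancel₀ _ hμm0]
    exact hlI (key z hzBt (hclosC z hzBT) l hieq)
  have hBTΩ : B T ⊆ Ω := fun z hz => ⟨hBTBt hz, hgood z hz⟩
  have hBTC : B T ⊆ C := by
    have hconv : Convex ℝ (Metric.closedBall (c T) (T * r)) := convex_closedBall _ _
    have hu₀BT : u₀ ∈ B T := hmono 0 T (le_refl 0) hT0 hu₀B0
    exact hconv.isPreconnected.subset_connectedComponentIn hu₀BT hBTΩ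
  -- T = 1
  have hT1' : T = 1 := by
    by_contra hne
    have hTlt : T < 1 := lt_of_le_of_ne hT1 hne
    have hBTcomp : IsCompact (B T) := isCompact_closedBall _ _
    obtain ⟨η, hη, hth⟩ := hBTcomp.exists_thickening_subset_open hCopen hBTC
    set ε : ℝ := min (1 - T) (η / (2 * r + 1)) with hε
    have hεpos : 0 < ε := lt_min (by linarith) (by positivity)
    have hε2 : ε ≤ η / (2 * r + 1) := min_le_right _ _
    have hε1 : ε ≤ 1 - T := min_le_left _ _
    have hTεpos : 0 < T + ε := by linarith
    have hsubth : B (T + ε) ⊆ thickening η (B T) := by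
      intro z hz
      have hz' : dist z (c (T + ε)) ≤ (T + ε) * r := hz
      rw [mem_thickening_iff]
      refine ⟨c T + (T / (T + ε)) • (z - c (T + ε)), ?_, ?_⟩
      · show dist (c T + (T / (T + ε)) • (z - c (T + ε))) (c T) ≤ T * r
        rw [dist_eq_norm]
        have h3 : c T + (T / (T + ε)) • (z - c (T + ε)) - c T
            = (T / (T + ε)) • (z - c (T + ε)) := by abel
        rw [h3, norm_smul, Real.norm_eq_abs,
          abs_of_nonneg (div_nonneg hT0 (le_of_lt hTεpos))]
        have h4 : ‖z - c (T + ε)‖ ≤ (T + ε) * r := by rw [← dist_eq_norm]; exact hz'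
        calc T / (T + ε) * ‖z - c (T + ε)‖ ≤ T / (T + ε) * ((T + ε) * r) :=
              mul_le_mul_of_nonneg_left h4 (div_nonneg hT0 (le_of_lt hTεpos))
          _ = T * r := by field_simp
      · rw [dist_eq_norm]
        have hq1 : (1 : ℝ) - T / (T + ε) = ε / (T + ε) := by
          field_simp; ring
        have hcc : c (T + ε) - c T = ε • v₀ := by
          show u₀ + (T + ε) • v₀ - (u₀ + T • v₀) = ε • v₀
          rw [add_sub_add_left_eq_sub, ← sub_smul, add_sub_cancel_left]
        have h5 : z - (c T + (T / (T + ε)) • (z - c (T + ε)))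
            = (ε / (T + ε)) • (z - c (T + ε)) + ε • v₀ := by
          rw [← hq1, sub_smul, one_smul, ← hcc]
          abel
        rw [h5]
        have h6 : ‖(ε / (T + ε)) • (z - c (T + ε)) + ε • v₀‖
            ≤ ε / (T + ε) * ‖z - c (T + ε)‖ + ε * ‖v₀‖ := by
          calc ‖(ε / (T + ε)) • (z - c (T + ε)) + ε • v₀‖
              ≤ ‖(ε / (T + ε)) • (z - c (T + ε))‖ + ‖ε • v₀‖ := norm_add_le _ _
            _ = ε / (T + ε) * ‖z - c (T + ε)‖ + ε * ‖v₀‖ := by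
                rw [norm_smul, norm_smul, Real.norm_eq_abs, Real.norm_eq_abs,
                  abs_of_nonneg (div_nonneg (le_of_lt hεpos) (le_of_lt hTεpos)),
                  abs_of_nonneg (le_of_lt hεpos)]
        have h4 : ‖z - c (T + ε)‖ ≤ (T + ε) * r := by rw [← dist_eq_norm]; exact hz'
        have h7 : ε / (T + ε) * ‖z - c (T + ε)‖ ≤ ε * r := by
          calc ε / (T + ε) * ‖z - c (T + ε)‖ ≤ ε / (T + ε) * ((T + ε) * r) :=
                mul_le_mul_of_nonneg_left h4 (div_nonneg (le_of_lt hεpos) (le_of_lt hTεpos))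
            _ = ε * r := by field_simp
        have h8 : ε * ‖v₀‖ ≤ ε * r := mul_le_mul_of_nonneg_left hv₀r (le_of_lt hεpos)
        have h9 : 2 * ε * r < η := by
          have h10 : ε * (2 * r + 1) ≤ η := by
            have := mul_le_mul_of_nonneg_right hε2 (by positivity : (0:ℝ) ≤ 2 * r + 1)
            rwa [div_mul_cancel₀ _ (by positivity : (2 * r + 1) ≠ 0)] at this
          linarith
        calc ‖(ε / (T + ε)) • (z - c (T + ε)) + ε • v₀‖
            ≤ ε / (T + ε) * ‖z - c (T + ε)‖ + ε * ‖v₀‖ := h6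
          _ ≤ ε * r + ε * r := add_le_add h7 h8
          _ = 2 * ε * r := by ring
          _ < η := h9
    have hTεS : T + ε ∈ S := ⟨⟨by linarith, by linarith⟩, hsubth.trans hth⟩
    have := le_csSup hSbdd hTεS
    linarith
  have hfinal : Metric.closedBall x₀ r ⊆ C := by
    rw [← hB1, ← hT1']
    exact hBTC
  -- conclusion
  intro j
  refine ⟨F j, I j, hIopen j, ?_, hFanal j, ?_⟩
  · rintro _ ⟨z, hzB, rfl⟩
    exact (hCΩ (hfinal hzB)).2 j
  · rintro y hy
    exact hFbase j hy
end
end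

section
/- Let a_j, φ_j (j = 1,2,3) be real analytic on B̃, with each a_j vanishing nowhere on B̃ and with ∇φ_i(x) and ∇φ_j(x) linearly independent at every x ∈ B̃ for all i ≠ j. Then the real vector space of all triples (f₁,f₂,f₃) of real analytic functions f_j : φ_j(B) → ℝ satisfying a₁(x)f₁(φ₁(x)) + a₂(x)f₂(φ₂(x)) + a₃(x)f₃(φ₃(x)) = 0 for all x ∈ B has dimension at most 3. -/
open MeasureTheory Set
open scoped ENNReal

noncomputable section

section Obs124Aux

open Set

local notation "E2" => EuclideanSpace ℝ (Fin 2)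

namespace Obs124

def ee (i : Fin 2) : E2 := EuclideanSpace.single i (1:ℝ)

lemma rep2 (x : E2) : x = x 0 • ee 0 + x 1 • ee 1 := by
  ext j
  fin_cases j <;>
    simp [ee, EuclideanSpace.single_apply]

lemma clm_ext2 {L M : E2 →L[ℝ] ℝ} (h0 : L (ee 0) = M (ee 0)) (h1 : L (ee 1) = M (ee 1)) :
    L = M := by
  ext x
  rw [show L x = L (x 0 • ee 0 + x 1 • ee 1) by rw [← rep2],
      show M x = M (x 0 • ee 0 + x 1 • ee 1) by rw [← rep2]]
  simp [map_add, h0, h1]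

lemma det_ne {L₁ L₂ : E2 →L[ℝ] ℝ} (h : LinearIndependent ℝ ![L₁, L₂]) :
    L₁ (ee 0) * L₂ (ee 1) - L₁ (ee 1) * L₂ (ee 0) ≠ 0 := by
  intro hdet
  rw [LinearIndependent.pair_iff] at h
  have key : ∀ s t : ℝ, s * L₁ (ee 0) + t * L₂ (ee 0) = 0 →
      s * L₁ (ee 1) + t * L₂ (ee 1) = 0 → s = 0 ∧ t = 0 := by
    intro s t he0 he1
    refine h s t ?_
    have : (s • L₁ + t • L₂) = 0 := by
      refine clm_ext2 ?_ ?_ <;>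
        simp only [ContinuousLinearMap.add_apply, ContinuousLinearMap.smul_apply,
          smul_eq_mul, ContinuousLinearMap.zero_apply]
      · exact he0
      · exact he1
    exact this
  have h1 := key (L₂ (ee 0)) (-(L₁ (ee 0))) (by ring) (by nlinarith)
  have h2 := key (L₂ (ee 1)) (-(L₁ (ee 1))) (by nlinarith) (by ring)
  have hL1 : L₁ (ee 0) = 0 := by have := h1.2; linarith [neg_eq_zero.mp this]
  have hL1' : L₁ (ee 1) = 0 := by have := h2.2; linarith [neg_eq_zero.mp this]
  have := h 1 0 (by
    refine clm_ext2 ?_ ?_ <;> simp [hL1, hL1'])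
  exact one_ne_zero this.1


/-- A function with zero derivative on `Ioo (-δ) δ` is constant there. -/
lemma const_of_deriv0 {h : ℝ → ℝ} {δ : ℝ} (hδ : 0 < δ)
    (hd : ∀ t ∈ Ioo (-δ) δ, HasDerivAt h 0 t) :
    ∀ t ∈ Ioo (-δ) δ, h t = h 0 := by
  intro t ht
  rcases lt_trichotomy t 0 with h0 | h0 | h0
  · have hsub : Icc t 0 ⊆ Ioo (-δ) δ := fun s hs =>
      ⟨lt_of_lt_of_le ht.1 hs.1, lt_of_le_of_lt hs.2 hδ⟩
    obtain ⟨c, _, hc⟩ := exists_hasDerivAt_eq_slope h (fun _ => 0) h0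
      (fun s hs => (hd s (hsub hs)).continuousAt.continuousWithinAt)
      (fun s hs => hd s (hsub (Ioo_subset_Icc_self hs)))
    rw [eq_comm, div_eq_zero_iff] at hc
    rcases hc with hc | hc
    · linarith
    · linarith
  · rw [h0]
  · have hsub : Icc 0 t ⊆ Ioo (-δ) δ := fun s hs =>
      ⟨lt_of_lt_of_le (neg_lt_zero.mpr hδ) hs.1, lt_of_le_of_lt hs.2 ht.2⟩
    obtain ⟨c, _, hc⟩ := exists_hasDerivAt_eq_slope h (fun _ => 0) h0
      (fun s hs => (hd s (hsub hs)).continuousAt.continuousWithinAt)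
      (fun s hs => hd s (hsub (Ioo_subset_Icc_self hs)))
    rw [eq_comm, div_eq_zero_iff] at hc
    rcases hc with hc | hc
    · linarith
    · linarith

/-- Vanishing of solutions of the scalar linear ODE `y' = q t * y` with `y 0 = 0`. -/
lemma ode_vanish {y q : ℝ → ℝ} {δ : ℝ} (hδ : 0 < δ)
    (hq : ContinuousOn q (Icc (-δ) δ))
    (hy : ∀ t ∈ Ioo (-δ) δ, HasDerivAt y (q t * y t) t)
    (h0 : y 0 = 0) : ∀ t ∈ Ioo (-δ) δ, y t = 0 := by
  obtain ⟨C, hC⟩ := (isCompact_Icc).exists_bound_of_continuousOn hq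
  set K : NNReal := Real.toNNReal C with hK
  set v : ℝ → ℝ → ℝ := fun t x => if t ∈ Icc (-δ) δ then q t * x else 0 with hv
  have hlip : ∀ t, LipschitzOnWith K (v t) univ := by
    intro t
    apply LipschitzWith.lipschitzOnWith
    apply LipschitzWith.of_dist_le_mul
    intro x x'
    by_cases htI : t ∈ Icc (-δ) δ
    · simp only [hv, if_pos htI]
      rw [Real.dist_eq, Real.dist_eq, ← mul_sub, abs_mul]
      have h1 : |q t| ≤ C := by simpa [Real.norm_eq_abs] using hC t htI
      have h2 : (C : ℝ) ≤ K := by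
        rw [hK]; exact le_max_left _ _
      exact mul_le_mul_of_nonneg_right (h1.trans h2) (abs_nonneg _)
    · simp only [hv, if_neg htI, dist_self]
      positivity
  have h00 : (0:ℝ) ∈ Ioo (-δ) δ := ⟨neg_lt_zero.mpr hδ, hδ⟩
  have := ODE_solution_unique_of_mem_Ioo (fun t _ => hlip t) h00
    (f := y) (g := fun _ => 0)
    (fun t htIoo => ⟨by
      rw [hv]; simp only [if_pos (Ioo_subset_Icc_self htIoo)]
      exact hy t htIoo, mem_univ _⟩)
    (fun t htIoo => ⟨by
      have : v t 0 = 0 := by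
        rw [hv]; by_cases htI : t ∈ Icc (-δ) δ <;> simp [htI]
      rw [this]; exact hasDerivAt_const _ _, mem_univ _⟩)
    (by simpa using h0)
  intro t htIoo
  exact this htIoo

/-- If `σ` has nonzero derivative at `0`, the image of `Ioo (-δ) δ` is a neighborhood
of `σ 0`. -/
lemma image_mem_nhds {σ : ℝ → ℝ} {c δ : ℝ} (hδ : 0 < δ) (hc : c ≠ 0)
    (hd : HasDerivAt σ c 0)
    (hcont : ContinuousOn σ (Ioo (-δ) δ)) :
    σ '' Ioo (-δ) δ ∈ nhds (σ 0) := by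
  rw [hasDerivAt_iff_tendsto_slope] at hd
  have hball : ∀ᶠ t in nhdsWithin 0 {(0:ℝ)}ᶜ, |slope σ 0 t - c| < |c| := by
    have := hd (Metric.ball_mem_nhds c (abs_pos.mpr hc))
    filter_upwards [this] with t ht
    simpa [Real.dist_eq] using ht
  have hIoo : ∀ᶠ t in nhdsWithin 0 {(0:ℝ)}ᶜ, t ∈ Ioo (-δ) δ := by
    apply eventually_nhdsWithin_of_eventually_nhds
    exact Ioo_mem_nhds (neg_lt_zero.mpr hδ) hδ
  -- find t₊ > 0 and t₋ < 0 with the slope condition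
  have hpos : ∃ t, 0 < t ∧ t ∈ Ioo (-δ) δ ∧ |slope σ 0 t - c| < |c| := by
    have h1 : ∀ᶠ t in nhdsWithin 0 (Ioi (0:ℝ)), |slope σ 0 t - c| < |c| ∧ t ∈ Ioo (-δ) δ :=
      (hball.and hIoo).filter_mono (nhdsWithin_mono 0 (fun t (ht : t ∈ Ioi 0) =>
        mem_compl_singleton_iff.mpr (ne_of_gt ht)))
    obtain ⟨t, ht, htmem⟩ := (h1.and self_mem_nhdsWithin).exists
    exact ⟨t, htmem, ht.2, ht.1⟩
  have hneg : ∃ t, t < 0 ∧ t ∈ Ioo (-δ) δ ∧ |slope σ 0 t - c| < |c| := by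
    have h1 : ∀ᶠ t in nhdsWithin 0 (Iio (0:ℝ)), |slope σ 0 t - c| < |c| ∧ t ∈ Ioo (-δ) δ :=
      (hball.and hIoo).filter_mono (nhdsWithin_mono 0 (fun t (ht : t ∈ Iio 0) =>
        mem_compl_singleton_iff.mpr (ne_of_lt ht)))
    obtain ⟨t, ht, htmem⟩ := (h1.and self_mem_nhdsWithin).exists
    exact ⟨t, htmem, ht.2, ht.1⟩
  obtain ⟨tp, htp0, htpI, htps⟩ := hpos
  obtain ⟨tn, htn0, htnI, htns⟩ := hneg
  have hslope_p : slope σ 0 tp = (σ tp - σ 0) / tp := by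
    rw [slope_def_field]; ring_nf
  have hslope_n : slope σ 0 tn = (σ tn - σ 0) / tn := by
    rw [slope_def_field]; ring_nf
  have hIccsub : Icc tn tp ⊆ Ioo (-δ) δ := fun s hs =>
    ⟨lt_of_lt_of_le htnI.1 hs.1, lt_of_le_of_lt hs.2 htpI.2⟩
  have hco : ContinuousOn σ (Icc tn tp) := hcont.mono hIccsub
  rcases lt_or_gt_of_ne hc with hcneg | hcpos
  · -- c < 0 : σ tp < σ 0 < σ tn
    have h1 : σ tp < σ 0 := by
      have : slope σ 0 tp < 0 := by
        cases abs_lt.mp htps with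
        | intro l r =>
          rw [abs_of_neg hcneg] at r; linarith
      rw [hslope_p] at this
      by_contra hcon
      push_neg at hcon
      have : 0 ≤ (σ tp - σ 0) / tp := div_nonneg (by linarith) htp0.le
      linarith
    have h2 : σ 0 < σ tn := by
      have : slope σ 0 tn < 0 := by
        cases abs_lt.mp htns with
        | intro l r =>
          rw [abs_of_neg hcneg] at r; linarith
      rw [hslope_n] at this
      by_contra hcon
      push_neg at hcon
      have : 0 ≤ (σ tn - σ 0) / tn := div_nonneg_iff.mpr (Or.inr ⟨by linarith, htn0.le⟩)
      linarith
    have hsub : Icc (σ tp) (σ tn) ⊆ σ '' Icc tn tp :=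
      intermediate_value_Icc' (le_of_lt (htn0.trans htp0)) hco
    apply Filter.mem_of_superset (Ioo_mem_nhds h1 h2)
    exact fun z hz => (image_mono hIccsub) (hsub (Ioo_subset_Icc_self hz))
  · -- c > 0 : σ tn < σ 0 < σ tp
    have h1 : σ 0 < σ tp := by
      have : 0 < slope σ 0 tp := by
        cases abs_lt.mp htps with
        | intro l r =>
          rw [abs_of_pos hcpos] at l; linarith
      rw [hslope_p] at this
      by_contra hcon
      push_neg at hcon
      have : (σ tp - σ 0) / tp ≤ 0 := div_nonpos_of_nonpos_of_nonneg (by linarith) htp0.le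
      linarith
    have h2 : σ tn < σ 0 := by
      have : 0 < slope σ 0 tn := by
        cases abs_lt.mp htns with
        | intro l r =>
          rw [abs_of_pos hcpos] at l; linarith
      rw [hslope_n] at this
      by_contra hcon
      push_neg at hcon
      have : (σ tn - σ 0) / tn ≤ 0 := div_nonpos_of_nonneg_of_nonpos (by linarith) htn0.le
      linarith
    have hsub : Icc (σ tn) (σ tp) ⊆ σ '' Icc tn tp :=
      intermediate_value_Icc (le_of_lt (htn0.trans htp0)) hco
    apply Filter.mem_of_superset (Ioo_mem_nhds h2 h1)
    exact fun z hz => (image_mono hIccsub) (hsub (Ioo_subset_Icc_self hz))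


/-- Rotated gradient vector field of `φ`. -/
def rotGrad (φ : E2 → ℝ) (x : E2) : E2 :=
  (fderiv ℝ φ x (ee 0)) • ee 1 - (fderiv ℝ φ x (ee 1)) • ee 0

lemma fderiv_rotGrad (ψ φ : E2 → ℝ) (x : E2) :
    fderiv ℝ ψ x (rotGrad φ x) =
      fderiv ℝ φ x (ee 0) * fderiv ℝ ψ x (ee 1)
        - fderiv ℝ φ x (ee 1) * fderiv ℝ ψ x (ee 0) := by
  simp [rotGrad, map_sub, _root_.map_smul, smul_eq_mul]

lemma fderiv_rotGrad_self (φ : E2 → ℝ) (x : E2) :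
    fderiv ℝ φ x (rotGrad φ x) = 0 := by
  rw [fderiv_rotGrad]; ring

lemma rotGrad_analytic {φ : E2 → ℝ} {U : Set E2}
    (hφ : AnalyticOnNhd ℝ φ U) : AnalyticOnNhd ℝ (rotGrad φ) U := by
  have hf : AnalyticOnNhd ℝ (fderiv ℝ φ) U := hφ.fderiv
  have h0 : AnalyticOnNhd ℝ (fun x => fderiv ℝ φ x (ee 0)) U :=
    (ContinuousLinearMap.apply ℝ ℝ (ee 0)).comp_analyticOnNhd hf
  have h1 : AnalyticOnNhd ℝ (fun x => fderiv ℝ φ x (ee 1)) U :=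
    (ContinuousLinearMap.apply ℝ ℝ (ee 1)).comp_analyticOnNhd hf
  exact (h0.smul (analyticOnNhd_const (v := ee 1))).sub
    (h1.smul (analyticOnNhd_const (v := ee 0)))


/-- Key step: from a first-order linear relation along the level set of `χ` through `xs`,
with nonvanishing leading coefficient, and `F (ψ xs) = 0`, conclude `F` vanishes near `ψ xs`. -/
lemma ode_curve {U : Set E2} (hU : IsOpen U) {xs : E2} (hxs : xs ∈ U)
    {Z : E2 → E2} (hZ : AnalyticOnNhd ℝ Z U)
    {χ ψ : E2 → ℝ} (hχ : AnalyticOnNhd ℝ χ U) (hψ : AnalyticOnNhd ℝ ψ U)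
    (hZχ : ∀ x ∈ U, fderiv ℝ χ x (Z x) = 0)
    (hZψ : fderiv ℝ ψ xs (Z xs) ≠ 0)
    {p s : E2 → ℝ} (hp : ContinuousOn p U) (hs : ContinuousOn s U)
    (hpne : ∀ x ∈ U, p x ≠ 0)
    {F : ℝ → ℝ} (hF : ∀ x ∈ U, AnalyticAt ℝ F (ψ x))
    (hrel : ∀ x ∈ U, χ x = χ xs → p x * deriv F (ψ x) + s x * F (ψ x) = 0)
    (hF0 : F (ψ xs) = 0) :
    F =ᶠ[nhds (ψ xs)] 0 := by
  -- local integral curve of Z through xs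
  obtain ⟨γ, hγ0, ε, hε, hγ⟩ :=
    ContDiffAt.exists_forall_mem_closedBall_exists_eq_forall_mem_Ioo_hasDerivAt₀
      ((hZ xs hxs).contDiffAt) (0:ℝ)
  have hγ' : ∀ t ∈ Ioo (-ε) ε, HasDerivAt γ (Z (γ t)) t := by
    intro t ht; exact hγ t (by simpa using ht)
  have hc0 : ContinuousAt γ 0 := (hγ' 0 ⟨neg_lt_zero.mpr hε, hε⟩).continuousAt
  have hUev : ∀ᶠ t in nhds (0:ℝ), γ t ∈ U := by
    apply hc0.eventually_mem
    rw [hγ0]; exact hU.mem_nhds hxs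
  obtain ⟨δ0, hδ0, hmem0⟩ := Metric.eventually_nhds_iff.mp hUev
  set δ : ℝ := min (δ0/2) (ε/2) with hδdef
  have hδ : 0 < δ := lt_min (by linarith) (by linarith)
  have hIccε : Icc (-δ) δ ⊆ Ioo (-ε) ε := by
    intro t ht
    have h1 : δ ≤ ε/2 := min_le_right _ _
    constructor <;> [linarith [ht.1]; linarith [ht.2]]
  have hmemU : ∀ t ∈ Icc (-δ) δ, γ t ∈ U := by
    intro t ht
    apply hmem0
    have h1 : δ ≤ δ0/2 := min_le_left _ _
    rw [Real.dist_eq, sub_zero, abs_lt]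
    constructor <;> [linarith [ht.1]; linarith [ht.2]]
  have hd : ∀ t ∈ Icc (-δ) δ, HasDerivAt γ (Z (γ t)) t := fun t ht => hγ' t (hIccε ht)
  -- χ is constant along γ
  have hχc : ∀ t ∈ Ioo (-δ) δ, χ (γ t) = χ xs := by
    have hconst := const_of_deriv0 (h := fun t => χ (γ t)) hδ (by
      intro t ht
      have hcd : HasDerivAt (fun t => χ (γ t)) (fderiv ℝ χ (γ t) (Z (γ t))) t :=
        ((hχ (γ t) (hmemU t (Ioo_subset_Icc_self ht))).differentiableAt.hasFDerivAt).comp_hasDerivAt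
          t (hd t (Ioo_subset_Icc_self ht))
      rwa [hZχ (γ t) (hmemU t (Ioo_subset_Icc_self ht))] at hcd)
    intro t ht
    simpa [hγ0] using hconst t ht
  -- the curve ψ ∘ γ and the solution y
  have hσ : ∀ t ∈ Icc (-δ) δ, HasDerivAt (fun t => ψ (γ t)) (fderiv ℝ ψ (γ t) (Z (γ t))) t := by
    intro t ht
    exact ((hψ (γ t) (hmemU t ht)).differentiableAt.hasFDerivAt).comp_hasDerivAt t (hd t ht)
  set y : ℝ → ℝ := fun t => F (ψ (γ t)) with hydef
  have hy : ∀ t ∈ Icc (-δ) δ,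
      HasDerivAt y (deriv F (ψ (γ t)) * fderiv ℝ ψ (γ t) (Z (γ t))) t := by
    intro t ht
    exact ((hF (γ t) (hmemU t ht)).differentiableAt.hasDerivAt).comp t (hσ t ht)
  set Q : E2 → ℝ := fun x => -(s x / p x) * fderiv ℝ ψ x (Z x) with hQdef
  set q : ℝ → ℝ := fun t => Q (γ (max (-δ) (min δ t))) with hqdef
  have hproj : ∀ t ∈ Icc (-δ) δ, max (-δ) (min δ t) = t := by
    intro t ht
    rw [min_eq_right ht.2, max_eq_right ht.1]
  have hQcont : ContinuousOn Q U := by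
    apply ContinuousOn.mul
    · exact ((hs.div hp hpne).neg)
    · exact ContinuousOn.clm_apply (hψ.fderiv.continuousOn) (hZ.continuousOn)
  have hγcont : ContinuousOn γ (Icc (-δ) δ) := fun t ht =>
    (hd t ht).continuousAt.continuousWithinAt
  have hqcont : ContinuousOn q (Icc (-δ) δ) := by
    apply ContinuousOn.congr (f := fun t => Q (γ t))
    · exact hQcont.comp hγcont (fun t ht => hmemU t ht)
    · intro t ht; rw [hqdef]; simp only [hproj t ht]
  have hyq : ∀ t ∈ Ioo (-δ) δ, HasDerivAt y (q t * y t) t := by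
    intro t ht
    have hrelt := hrel (γ t) (hmemU t (Ioo_subset_Icc_self ht)) (hχc t ht)
    have hpt := hpne (γ t) (hmemU t (Ioo_subset_Icc_self ht))
    have hder : deriv F (ψ (γ t)) = -(s (γ t) / p (γ t)) * y t := by
      field_simp
      linarith [hrelt]
    have := hy t (Ioo_subset_Icc_self ht)
    rw [hder] at this
    have hq : q t = Q (γ t) := by rw [hqdef]; simp only [hproj t (Ioo_subset_Icc_self ht)]
    rw [hq, hQdef]
    convert this using 1
    ring
  have hy0 : y 0 = 0 := by rw [hydef]; simp only [hγ0]; exact hF0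
  have hvanish := ode_vanish hδ hqcont hyq hy0
  -- image of ψ ∘ γ is a neighborhood of ψ xs
  have hσ0 : HasDerivAt (fun t => ψ (γ t)) (fderiv ℝ ψ xs (Z xs)) 0 := by
    have := hσ 0 ⟨neg_nonpos.mpr hδ.le, hδ.le⟩
    rwa [hγ0] at this
  have hσcont : ContinuousOn (fun t => ψ (γ t)) (Ioo (-δ) δ) := fun t ht =>
    (hσ t (Ioo_subset_Icc_self ht)).continuousAt.continuousWithinAt
  have himg := image_mem_nhds hδ hZψ hσ0 hσcont
  simp only [hγ0] at himg
  filter_upwards [himg] with z hz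
  obtain ⟨t, ht, rfl⟩ := hz
  exact hvanish t ht


/-- Kernel lemma: a solution vanishing at the three "initial data" vanishes identically. -/
lemma ker_lemma
    (x₀ : E2) (r : ℝ) (hr : 0 < r)
    (Bt : Set E2) (hBtOpen : IsOpen Bt)
    (hBBt : Metric.closedBall x₀ r ⊆ Bt)
    (a φ : Fin 3 → E2 → ℝ)
    (ha : ∀ j, AnalyticOnNhd ℝ (a j) Bt)
    (hφ : ∀ j, AnalyticOnNhd ℝ (φ j) Bt)
    (haNz : ∀ j, ∀ x ∈ Bt, a j x ≠ 0)
    (hInd : ∀ i j : Fin 3, i ≠ j → ∀ x ∈ Bt,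
      LinearIndependent ℝ ![fderiv ℝ (φ i) x, fderiv ℝ (φ j) x])
    (f : Fin 3 → ℝ → ℝ)
    (hfA : ∀ j, AnalyticOnNhd ℝ (f j) (φ j '' Metric.closedBall x₀ r))
    (hfE : ∀ x ∈ Metric.closedBall x₀ r, ∑ j, a j x * f j (φ j x) = 0)
    (h0 : f 0 (φ 0 x₀) = 0) (h1 : f 1 (φ 1 x₀) = 0) (h1' : deriv (f 1) (φ 1 x₀) = 0) :
    ∀ j, ∀ y ∈ φ j '' Metric.closedBall x₀ r, f j y = 0 := by
  set B := Metric.closedBall x₀ r with hBdef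
  set V := Metric.ball x₀ r with hVdef
  have hx₀B : x₀ ∈ B := Metric.mem_closedBall_self hr.le
  have hx₀V : x₀ ∈ V := Metric.mem_ball_self hr
  have hVB : V ⊆ B := Metric.ball_subset_closedBall
  have hVBt : V ⊆ Bt := hVB.trans hBBt
  have hVopen : IsOpen V := Metric.isOpen_ball
  -- abbreviations
  set A : Fin 3 → E2 → ℝ := fun j x => fderiv ℝ (a j) x (rotGrad (φ 2) x) with hAdef
  set D : Fin 3 → E2 → ℝ := fun j x => fderiv ℝ (φ j) x (rotGrad (φ 2) x) with hDdef
  -- the key relation on V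
  have hR : ∀ x ∈ V,
      (a 2 x * A 0 x - A 2 x * a 0 x) * f 0 (φ 0 x)
        + (a 2 x * a 0 x * D 0 x) * deriv (f 0) (φ 0 x)
        + (a 2 x * A 1 x - A 2 x * a 1 x) * f 1 (φ 1 x)
        + (a 2 x * a 1 x * D 1 x) * deriv (f 1) (φ 1 x) = 0 := by
    intro x hx
    have hxBt : x ∈ Bt := hVBt hx
    -- derivative CLMs of each term
    have hterm : ∀ j : Fin 3, HasFDerivAt (fun x => a j x * f j (φ j x))
        ((f j (φ j x)) • fderiv ℝ (a j) x
          + (a j x * deriv (f j) (φ j x)) • fderiv ℝ (φ j) x) x := by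
      intro j
      have hA' : HasFDerivAt (a j) (fderiv ℝ (a j) x) x :=
        ((ha j) x hxBt).differentiableAt.hasFDerivAt
      have hΦ : HasFDerivAt (φ j) (fderiv ℝ (φ j) x) x :=
        ((hφ j) x hxBt).differentiableAt.hasFDerivAt
      have hfj : HasDerivAt (f j) (deriv (f j) (φ j x)) (φ j x) :=
        ((hfA j) (φ j x) ⟨x, hVB hx, rfl⟩).differentiableAt.hasDerivAt
      have hcomp : HasFDerivAt (fun x => f j (φ j x))
          ((deriv (f j) (φ j x)) • fderiv ℝ (φ j) x) x :=
        hfj.comp_hasFDerivAt x hΦ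
      have := hA'.mul hcomp
      refine this.congr_fderiv ?_
      rw [smul_smul]
      module
    have hsum : HasFDerivAt (fun x => ∑ j : Fin 3, a j x * f j (φ j x))
        (∑ j : Fin 3, ((f j (φ j x)) • fderiv ℝ (a j) x
          + (a j x * deriv (f j) (φ j x)) • fderiv ℝ (φ j) x)) x := by
      exact HasFDerivAt.fun_sum (fun j _ => hterm j)
    have hev : (fun x => ∑ j : Fin 3, a j x * f j (φ j x)) =ᶠ[nhds x] (fun _ => 0) := by
      filter_upwards [hVopen.mem_nhds hx] with z hz
      exact hfE z (hVB hz)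
    have hzero : HasFDerivAt (fun x => ∑ j : Fin 3, a j x * f j (φ j x)) 0 x :=
      (hasFDerivAt_const (0:ℝ) x : HasFDerivAt _ (0 : E2 →L[ℝ] ℝ) x).congr_of_eventuallyEq hev
    have huniq := hsum.unique hzero
    have hEQ0 := congrArg (fun L : E2 →L[ℝ] ℝ => L (rotGrad (φ 2) x)) huniq
    simp only [ContinuousLinearMap.coe_sum', Finset.sum_apply,
      ContinuousLinearMap.add_apply, ContinuousLinearMap.coe_smul', Pi.smul_apply,
      smul_eq_mul, ContinuousLinearMap.zero_apply] at hEQ0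
    rw [Fin.sum_univ_three] at hEQ0
    have hD22 : fderiv ℝ (φ 2) x (rotGrad (φ 2) x) = 0 := fderiv_rotGrad_self _ _
    rw [hD22] at hEQ0
    have hEQfull := hfE x (hVB hx)
    rw [Fin.sum_univ_three] at hEQfull
    simp only [hAdef, hDdef]
    linear_combination (a 2 x) * hEQ0 - (fderiv ℝ (a 2) x (rotGrad (φ 2) x)) * hEQfull
  -- continuity facts
  have hAcont : ∀ j : Fin 3, ContinuousOn (A j) Bt := by
    intro j
    exact ContinuousOn.clm_apply ((ha j).fderiv.continuousOn)
      ((rotGrad_analytic (hφ 2)).continuousOn)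
  have hDcont : ∀ j : Fin 3, ContinuousOn (D j) Bt := by
    intro j
    exact ContinuousOn.clm_apply ((hφ j).fderiv.continuousOn)
      ((rotGrad_analytic (hφ 2)).continuousOn)
  have hDne : ∀ j : Fin 3, j ≠ 2 → ∀ x ∈ Bt, D j x ≠ 0 := by
    intro j hj x hx
    simpa only [hDdef, fderiv_rotGrad] using det_ne (hInd 2 j (Ne.symm hj) x hx)
  have hpre : ∀ j : Fin 3, IsPreconnected (φ j '' B) := by
    intro j
    exact ((convex_closedBall x₀ r).isPreconnected).image _ ((hφ j).continuousOn.mono hBBt)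
  -- step 1 : f 0 vanishes near φ 0 x₀
  have hev0 : f 0 =ᶠ[nhds (φ 0 x₀)] 0 := by
    apply ode_curve (hU := hVopen) (hxs := hx₀V)
      (hZ := (rotGrad_analytic (hφ 1)).mono hVBt)
      (hχ := (hφ 1).mono hVBt) (hψ := (hφ 0).mono hVBt)
      (p := fun x => a 2 x * a 0 x * D 0 x)
      (s := fun x => a 2 x * A 0 x - A 2 x * a 0 x)
    · intro x _; exact fderiv_rotGrad_self _ _
    · rw [fderiv_rotGrad]
      exact det_ne (hInd 1 0 (by decide) x₀ (hBBt hx₀B))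
    · exact ((((ha 2).continuousOn.mul (ha 0).continuousOn).mul (hDcont 0)).mono hVBt)
    · exact ((((ha 2).continuousOn.mul (hAcont 0)).sub
        ((hAcont 2).mul (ha 0).continuousOn)).mono hVBt)
    · intro x hx
      exact mul_ne_zero (mul_ne_zero (haNz 2 x (hVBt hx)) (haNz 0 x (hVBt hx)))
        (hDne 0 (by decide) x (hVBt hx))
    · intro x hx; exact (hfA 0) (φ 0 x) ⟨x, hVB hx, rfl⟩
    · intro x hx hlevel
      have := hR x hx
      rw [hlevel, h1, h1'] at this
      linarith
    · exact h0
  have hf0glob : EqOn (f 0) 0 (φ 0 '' B) :=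
    (hfA 0).eqOn_zero_of_preconnected_of_eventuallyEq_zero (hpre 0) ⟨x₀, hx₀B, rfl⟩ hev0
  have hd0 : deriv (f 0) (φ 0 x₀) = 0 := by
    have := hev0.deriv_eq
    rw [this, show (0:ℝ→ℝ) = fun _ => (0:ℝ) from rfl, deriv_const]
  -- step 2 : f 1 vanishes near φ 1 x₀
  have hev1 : f 1 =ᶠ[nhds (φ 1 x₀)] 0 := by
    apply ode_curve (hU := hVopen) (hxs := hx₀V)
      (hZ := (rotGrad_analytic (hφ 0)).mono hVBt)
      (hχ := (hφ 0).mono hVBt) (hψ := (hφ 1).mono hVBt)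
      (p := fun x => a 2 x * a 1 x * D 1 x)
      (s := fun x => a 2 x * A 1 x - A 2 x * a 1 x)
    · intro x _; exact fderiv_rotGrad_self _ _
    · rw [fderiv_rotGrad]
      exact det_ne (hInd 0 1 (by decide) x₀ (hBBt hx₀B))
    · exact ((((ha 2).continuousOn.mul (ha 1).continuousOn).mul (hDcont 1)).mono hVBt)
    · exact ((((ha 2).continuousOn.mul (hAcont 1)).sub
        ((hAcont 2).mul (ha 1).continuousOn)).mono hVBt)
    · intro x hx
      exact mul_ne_zero (mul_ne_zero (haNz 2 x (hVBt hx)) (haNz 1 x (hVBt hx)))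
        (hDne 1 (by decide) x (hVBt hx))
    · intro x hx; exact (hfA 1) (φ 1 x) ⟨x, hVB hx, rfl⟩
    · intro x hx hlevel
      have := hR x hx
      rw [hlevel, h0, hd0] at this
      linarith
    · exact h1
  have hf1glob : EqOn (f 1) 0 (φ 1 '' B) :=
    (hfA 1).eqOn_zero_of_preconnected_of_eventuallyEq_zero (hpre 1) ⟨x₀, hx₀B, rfl⟩ hev1
  -- step 3 : f 2 vanishes on the image directly
  have hf2glob : ∀ y ∈ φ 2 '' B, f 2 y = 0 := by
    rintro y ⟨x, hxB, rfl⟩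
    have := hfE x hxB
    rw [Fin.sum_univ_three] at this
    have e0 : f 0 (φ 0 x) = 0 := hf0glob ⟨x, hxB, rfl⟩
    have e1 : f 1 (φ 1 x) = 0 := hf1glob ⟨x, hxB, rfl⟩
    rw [e0, e1] at this
    have ha2 : a 2 x ≠ 0 := haNz 2 x (hBBt hxB)
    have : a 2 x * f 2 (φ 2 x) = 0 := by linarith
    exact (mul_eq_zero.mp this).resolve_left ha2
  intro j
  fin_cases j
  · exact fun y hy => hf0glob hy
  · exact fun y hy => hf1glob hy
  · exact hf2glob


variable (a φ : Fin 3 → E2 → ℝ) (B : Set E2) (x₀ : E2)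

/-- being a solution triple -/
def SolP (f : Fin 3 → ℝ → ℝ) : Prop :=
  (∀ j, AnalyticOnNhd ℝ (f j) (φ j '' B)) ∧
  (∀ x ∈ B, ∑ j, a j x * f j (φ j x) = 0)

/-- the "initial data" of a solution triple -/
def Lval (f : Fin 3 → ℝ → ℝ) : Fin 3 → ℝ := fun k =>
  if k = 0 then f 0 (φ 0 x₀) else if k = 1 then f 1 (φ 1 x₀) else deriv (f 1) (φ 1 x₀)

/-- the space of achievable initial data -/
def TSub (hx₀ : x₀ ∈ B) : Submodule ℝ (Fin 3 → ℝ) where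
  carrier := {v | ∃ f, SolP a φ B f ∧ Lval φ x₀ f = v}
  add_mem' := by
    rintro v w ⟨f, ⟨hfA, hfE⟩, rfl⟩ ⟨g, ⟨hgA, hgE⟩, rfl⟩
    refine ⟨fun j y => f j y + g j y, ⟨?_, ?_⟩, ?_⟩
    · intro j; exact (hfA j).add (hgA j)
    · intro x hx
      have h1 := hfE x hx
      have h2 := hgE x hx
      rw [Fin.sum_univ_three] at h1 h2 ⊢
      linear_combination h1 + h2
    · have hdf : DifferentiableAt ℝ (f 1) (φ 1 x₀) :=
        ((hfA 1) _ ⟨x₀, hx₀, rfl⟩).differentiableAt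
      have hdg : DifferentiableAt ℝ (g 1) (φ 1 x₀) :=
        ((hgA 1) _ ⟨x₀, hx₀, rfl⟩).differentiableAt
      funext k
      fin_cases k <;>
        simp [Lval, Pi.add_apply, deriv_fun_add hdf hdg]
  zero_mem' := by
    refine ⟨fun _ _ => 0, ⟨fun j => analyticOnNhd_const, fun x hx => by simp⟩, ?_⟩
    funext k; fin_cases k <;> simp [Lval]
  smul_mem' := by
    rintro t v ⟨f, ⟨hfA, hfE⟩, rfl⟩
    refine ⟨fun j y => t * f j y, ⟨?_, ?_⟩, ?_⟩
    · intro j; exact analyticOnNhd_const.mul (hfA j)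
    · intro x hx
      have h1 := hfE x hx
      rw [Fin.sum_univ_three] at h1 ⊢
      linear_combination t * h1
    · have hdf : DifferentiableAt ℝ (f 1) (φ 1 x₀) :=
        ((hfA 1) _ ⟨x₀, hx₀, rfl⟩).differentiableAt
      funext k
      fin_cases k <;>
        simp [Lval, deriv_const_mul t hdf, Pi.smul_apply, smul_eq_mul]

lemma mem_TSub {hx₀ : x₀ ∈ B} {v : Fin 3 → ℝ} :
    v ∈ TSub a φ B x₀ hx₀ ↔ ∃ f, SolP a φ B f ∧ Lval φ x₀ f = v := Iff.rfl

end Obs124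

end Obs124Aux

open Obs124 in
/-- Observation 12.4: the space of real analytic solutions `(f₁, f₂, f₃)` of
`a₁·(f₁∘φ₁) + a₂·(f₂∘φ₂) + a₃·(f₃∘φ₃) = 0` on `B` has dimension at most `3`:
there are three solutions whose restrictions to the images `φⱼ(B)` span all solutions. -/
theorem solution_space_dimension_at_most_three
    (x₀ : EuclideanSpace ℝ (Fin 2)) (r : ℝ) (hr : 0 < r)
    (Bt : Set (EuclideanSpace ℝ (Fin 2))) (hBtOpen : IsOpen Bt) (hBtConn : IsConnected Bt)
    (hBBt : Metric.closedBall x₀ r ⊆ Bt)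
    (a φ : Fin 3 → EuclideanSpace ℝ (Fin 2) → ℝ)
    (ha : ∀ j, AnalyticOnNhd ℝ (a j) Bt)
    (hφ : ∀ j, AnalyticOnNhd ℝ (φ j) Bt)
    (haNz : ∀ j, ∀ x ∈ Bt, a j x ≠ 0)
    (hInd : ∀ i j : Fin 3, i ≠ j → ∀ x ∈ Bt,
      LinearIndependent ℝ ![fderiv ℝ (φ i) x, fderiv ℝ (φ j) x]) :
    ∃ g : Fin 3 → Fin 3 → ℝ → ℝ,
      (∀ i : Fin 3,
        (∀ j, AnalyticOnNhd ℝ (g i j) (φ j '' Metric.closedBall x₀ r)) ∧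
        (∀ x ∈ Metric.closedBall x₀ r, ∑ j, a j x * g i j (φ j x) = 0)) ∧
      ∀ f : Fin 3 → ℝ → ℝ,
        (∀ j, AnalyticOnNhd ℝ (f j) (φ j '' Metric.closedBall x₀ r)) →
        (∀ x ∈ Metric.closedBall x₀ r, ∑ j, a j x * f j (φ j x) = 0) →
        ∃ c : Fin 3 → ℝ, ∀ j, ∀ y ∈ φ j '' Metric.closedBall x₀ r,
          f j y = ∑ i, c i * g i j y := by
  classical
  have hx₀B : x₀ ∈ Metric.closedBall x₀ r := Metric.mem_closedBall_self hr.le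
  set T : Submodule ℝ (Fin 3 → ℝ) := TSub a φ (Metric.closedBall x₀ r) x₀ hx₀B with hTdef
  set m := Module.finrank ℝ T with hmdef
  have hm : m ≤ 3 := by
    have := Submodule.finrank_le T
    rwa [Module.finrank_fin_fun] at this
  set b := Module.finBasis ℝ T with hbdef
  -- the spanning vectors
  set w : Fin 3 → (Fin 3 → ℝ) := fun i =>
    if h : (i:ℕ) < m then ((b ⟨i, h⟩ : T) : Fin 3 → ℝ) else 0 with hwdef
  have hwT : ∀ i, w i ∈ T := by
    intro i
    by_cases h : (i:ℕ) < m
    · simp only [hwdef, dif_pos h]; exact (b ⟨i, h⟩).2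
    · simp only [hwdef, dif_neg h]; exact T.zero_mem
  have hgex : ∀ i, ∃ gg, SolP a φ (Metric.closedBall x₀ r) gg ∧ Lval φ x₀ gg = w i := fun i =>
    (mem_TSub a φ _ x₀).mp (hwT i)
  choose g hgSol hgL using hgex
  refine ⟨g, fun i => ⟨(hgSol i).1, (hgSol i).2⟩, ?_⟩
  intro f hfA hfE
  have hfT : Lval φ x₀ f ∈ T := (mem_TSub a φ _ x₀).mpr ⟨f, ⟨hfA, hfE⟩, rfl⟩
  set vT : T := ⟨Lval φ x₀ f, hfT⟩ with hvTdef
  set c : Fin 3 → ℝ := fun i => if h : (i:ℕ) < m then b.repr vT ⟨i, h⟩ else 0 with hcdef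
  -- the key identity : ∑ i, c i • w i = Lval f
  have key : ∑ i : Fin 3, c i • w i = Lval φ x₀ f := by
    have hFeq : ∀ i : Fin 3, c i • w i =
        (if h : (i:ℕ) < m then (b.repr vT ⟨i,h⟩) • ((b ⟨i,h⟩ : T) : Fin 3 → ℝ) else 0) := by
      intro i
      by_cases h : (i:ℕ) < m
      · simp only [hcdef, hwdef, dif_pos h]
      · simp only [hcdef, hwdef, dif_neg h, zero_smul]
    rw [Finset.sum_congr rfl (fun i _ => hFeq i)]
    rw [← Finset.sum_filter_add_sum_filter_not Finset.univ (fun i : Fin 3 => (i:ℕ) < m)]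
    have hzero : ∑ i ∈ Finset.univ.filter (fun i : Fin 3 => ¬ (i:ℕ) < m),
        (if h : (i:ℕ) < m then (b.repr vT ⟨i,h⟩) • ((b ⟨i,h⟩ : T) : Fin 3 → ℝ) else 0) = 0 := by
      apply Finset.sum_eq_zero
      intro i hi
      rw [dif_neg (Finset.mem_filter.mp hi).2]
    rw [hzero, add_zero]
    have hbij : ∑ i ∈ Finset.univ.filter (fun i : Fin 3 => (i:ℕ) < m),
        (if h : (i:ℕ) < m then (b.repr vT ⟨i,h⟩) • ((b ⟨i,h⟩ : T) : Fin 3 → ℝ) else 0)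
        = ∑ k : Fin m, (b.repr vT k) • ((b k : T) : Fin 3 → ℝ) := by
      refine Finset.sum_bij'
        (i := fun (i : Fin 3) (hi : i ∈ Finset.univ.filter (fun i : Fin 3 => (i:ℕ) < m)) =>
          (⟨(i:ℕ), (Finset.mem_filter.mp hi).2⟩ : Fin m))
        (j := fun (k : Fin m) (_ : k ∈ Finset.univ) => Fin.castLE hm k)
        ?_ ?_ ?_ ?_ ?_
      · intro i hi; exact Finset.mem_univ _
      · intro k hk
        simp only [Finset.mem_filter, Finset.mem_univ, true_and]
        exact k.2
      · intro i hi; exact Fin.ext rfl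
      · intro k hk; exact Fin.ext rfl
      · intro i hi
        rw [dif_pos (Finset.mem_filter.mp hi).2]
    rw [hbij]
    have hrepr := b.sum_repr vT
    have hcoe := congrArg (Submodule.subtype T) hrepr
    rw [map_sum] at hcoe
    simpa using hcoe
  have hkey : ∀ k : Fin 3, ∑ i : Fin 3, c i * (Lval φ x₀ (g i)) k = Lval φ x₀ f k := by
    intro k
    have hck := congrFun key k
    rw [Finset.sum_apply] at hck
    simp only [Pi.smul_apply, smul_eq_mul] at hck
    rw [← hck]
    apply Finset.sum_congr rfl
    intro i _
    rw [hgL i]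
  -- differentiability at the base point
  have hdgi : ∀ i : Fin 3, DifferentiableAt ℝ (g i 1) (φ 1 x₀) := fun i =>
    (((hgSol i).1 1) _ ⟨x₀, hx₀B, rfl⟩).differentiableAt
  have hdf1 : DifferentiableAt ℝ (f 1) (φ 1 x₀) :=
    ((hfA 1) _ ⟨x₀, hx₀B, rfl⟩).differentiableAt
  -- the difference triple
  have hdiffA : ∀ j, AnalyticOnNhd ℝ
      (fun y => f j y - (c 0 * g 0 j y + c 1 * g 1 j y + c 2 * g 2 j y))
      (φ j '' Metric.closedBall x₀ r) := by
    intro j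
    exact (hfA j).sub (((analyticOnNhd_const.mul ((hgSol 0).1 j)).add
      (analyticOnNhd_const.mul ((hgSol 1).1 j))).add
      (analyticOnNhd_const.mul ((hgSol 2).1 j)))
  have hdiffE : ∀ x ∈ Metric.closedBall x₀ r, ∑ j : Fin 3,
      a j x * (f j (φ j x) - (c 0 * g 0 j (φ j x) + c 1 * g 1 j (φ j x)
        + c 2 * g 2 j (φ j x))) = 0 := by
    intro x hx
    have hf' := hfE x hx
    have hg0 := (hgSol 0).2 x hx
    have hg1 := (hgSol 1).2 x hx
    have hg2 := (hgSol 2).2 x hx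
    rw [Fin.sum_univ_three] at hf' hg0 hg1 hg2 ⊢
    linear_combination hf' - c 0 * hg0 - c 1 * hg1 - c 2 * hg2
  -- components of the key identity
  have hk0 := hkey 0
  have hk1 := hkey 1
  have hk2 := hkey 2
  simp only [Lval, Fin.sum_univ_three] at hk0 hk1 hk2
  simp only [show ((0:Fin 3) = 0) = True by simp, show ((0:Fin 3) = 1) = False by simp,
    show ((1:Fin 3) = 0) = False by simp, show ((1:Fin 3) = 1) = True by simp,
    show ((2:Fin 3) = 0) = False by simp, show ((2:Fin 3) = 1) = False by simp,
    if_true, if_false] at hk0 hk1 hk2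
  -- initial data of the difference vanish
  have hc0 : (fun y => f 0 y - (c 0 * g 0 0 y + c 1 * g 1 0 y + c 2 * g 2 0 y)) (φ 0 x₀)
      = 0 := by
    simp only []
    linarith [hk0]
  have hc1 : (fun y => f 1 y - (c 0 * g 0 1 y + c 1 * g 1 1 y + c 2 * g 2 1 y)) (φ 1 x₀)
      = 0 := by
    simp only []
    linarith [hk1]
  have hc2 : deriv (fun y => f 1 y - (c 0 * g 0 1 y + c 1 * g 1 1 y + c 2 * g 2 1 y)) (φ 1 x₀)
      = 0 := by
    have hdsum : DifferentiableAt ℝ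
        (fun y => c 0 * g 0 1 y + c 1 * g 1 1 y + c 2 * g 2 1 y) (φ 1 x₀) :=
      (((hdgi 0).const_mul _).add ((hdgi 1).const_mul _)).add ((hdgi 2).const_mul _)
    rw [deriv_fun_sub hdf1 hdsum]
    rw [deriv_fun_add (f := fun y => c 0 * g 0 1 y + c 1 * g 1 1 y) (g := fun y => c 2 * g 2 1 y)
        (((hdgi 0).const_mul _).add ((hdgi 1).const_mul _)) ((hdgi 2).const_mul _),
      deriv_fun_add (f := fun y => c 0 * g 0 1 y) (g := fun y => c 1 * g 1 1 y) ((hdgi 0).const_mul _) ((hdgi 1).const_mul _),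
      deriv_const_mul _ (hdgi 0), deriv_const_mul _ (hdgi 1), deriv_const_mul _ (hdgi 2)]
    linarith [hk2]
  have hker := ker_lemma x₀ r hr Bt hBtOpen hBBt a φ ha hφ haNz hInd
    (fun j y => f j y - (c 0 * g 0 j y + c 1 * g 1 j y + c 2 * g 2 j y))
    hdiffA hdiffE hc0 hc1 hc2
  refine ⟨c, ?_⟩
  intro j y hy
  have hz := hker j y hy
  rw [Fin.sum_univ_three]
  linarith [hz]
end
end
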